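/- arXiv:2008.05974 — 7 statements merged into one kernel-verified Lean document; each statement's English description precedes it below -/
import Mathlib

section
/- Fix (h₁,h₂) equal to (1,2) or (2,3) and α ∈ (0,1), and for each positive integer f let x_f = χ²_f(α). Then there exist a constant C > 0 and F₀ such that for all integers f ≥ F₀ and all integers v₁, v₂ ≥ 1: | ∑_{w₁=0}^{v₁} ∑_{w₂=0}^{v₂} C(v₁,w₁) C(v₂,w₂) (−1)^{v₁−w₁+v₂−w₂} P(χ²_{2f+2h₁w₁+2h₂w₂} ≤ x_f) | ≤ v₁! · v₂! · C^{v₁+v₂} · f^{−(v₁+v₂)/2}, where C(v,w) is the binomial coefficient. -/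
open MeasureTheory ProbabilityTheory Filter Topology Set

noncomputable section

/-- Chi-squared distribution with `f` degrees of freedom:
the Gamma distribution with shape `f/2` and rate `1/2`. -/
def chiSq (f : ℕ) : Measure ℝ := gammaMeasure ((f : ℝ) / 2) (1 / 2)

open Real

/-- Exponential tilting of the gamma pdf. -/
lemma tilt_gammaPDFReal (a r c : ℝ) (hr : 0 < r) (hrc : 0 < r - c) (t : ℝ) :
    Real.exp (c * t) * gammaPDFReal a r t =
      (r / (r - c)) ^ a * gammaPDFReal a (r - c) t := by
  unfold gammaPDFReal
  split_ifs with h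
  · have h2 : ((r - c) : ℝ) ^ a ≠ 0 := (Real.rpow_pos_of_pos hrc a).ne'
    have hdiv : (r / (r - c)) ^ a * (r - c) ^ a = r ^ a := by
      rw [Real.div_rpow hr.le hrc.le, div_mul_cancel₀ _ h2]
    have hexp : Real.exp (c * t) * Real.exp (-(r * t)) = Real.exp (-((r - c) * t)) := by
      rw [← Real.exp_add]; ring_nf
    calc Real.exp (c * t) * (r ^ a / Real.Gamma a * t ^ (a - 1) * Real.exp (-(r * t)))
        = r ^ a / Real.Gamma a * t ^ (a - 1) * (Real.exp (c * t) * Real.exp (-(r * t))) := by ring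
      _ = r ^ a / Real.Gamma a * t ^ (a - 1) * Real.exp (-((r - c) * t)) := by rw [hexp]
      _ = (r / (r - c)) ^ a * ((r - c) ^ a / Real.Gamma a * t ^ (a - 1) *
            Real.exp (-((r - c) * t))) := by rw [← hdiv]; ring
  · ring

lemma lintegral_tilt (a r c : ℝ) (ha : 0 < a) (hr : 0 < r) (hrc : 0 < r - c) :
    ∫⁻ t, ENNReal.ofReal (Real.exp (c * t) * gammaPDFReal a r t) =
      ENNReal.ofReal ((r / (r - c)) ^ a) := by
  have key : ∀ t, ENNReal.ofReal (Real.exp (c * t) * gammaPDFReal a r t)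
      = ENNReal.ofReal ((r / (r - c)) ^ a) * gammaPDF a (r - c) t := by
    intro t
    rw [tilt_gammaPDFReal a r c hr hrc,
      ENNReal.ofReal_mul (Real.rpow_nonneg (by positivity) a)]
    rfl
  simp_rw [key]
  rw [lintegral_const_mul' _ _ ENNReal.ofReal_ne_top,
    lintegral_gammaPDF_eq_one ha hrc, mul_one]

/-- Chernoff bound for the lower tail of a gamma distribution with rate 1/2. -/
lemma chernoff_Iic (a x s : ℝ) (ha : 0 < a) (hs : 0 < s) :
    ((gammaMeasure a (1/2)) (Iic x)).toReal ≤
      Real.exp (s * x) * ((1/2) / (1/2 + s)) ^ a := by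
  have hrc : (0:ℝ) < 1/2 - (-s) := by linarith
  have hB : (0:ℝ) ≤ Real.exp (s * x) * ((1/2) / (1/2 + s)) ^ a := by positivity
  refine ENNReal.toReal_le_of_le_ofReal hB ?_
  rw [gammaMeasure, withDensity_apply _ measurableSet_Iic]
  calc ∫⁻ t in Iic x, gammaPDF a (1/2) t
      ≤ ∫⁻ t in Iic x, ENNReal.ofReal
          (Real.exp (s * x) * (Real.exp ((-s) * t) * gammaPDFReal a (1/2) t)) := by
        refine setLIntegral_mono' measurableSet_Iic fun t ht => ?_
        rw [gammaPDF]
        refine ENNReal.ofReal_le_ofReal ?_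
        have h1 : (1:ℝ) ≤ Real.exp (s * x) * Real.exp ((-s) * t) := by
          rw [← Real.exp_add]
          apply Real.one_le_exp
          have : t ≤ x := ht
          nlinarith
        have h2 := gammaPDFReal_nonneg (r := (1/2:ℝ)) ha (by norm_num) t
        nlinarith
    _ ≤ ∫⁻ t, ENNReal.ofReal
          (Real.exp (s * x) * (Real.exp ((-s) * t) * gammaPDFReal a (1/2) t)) :=
        setLIntegral_le_lintegral _ _
    _ = ENNReal.ofReal (Real.exp (s * x)) *
          ∫⁻ t, ENNReal.ofReal (Real.exp ((-s) * t) * gammaPDFReal a (1/2) t) := by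
        simp_rw [ENNReal.ofReal_mul (Real.exp_nonneg (s * x))]
        rw [lintegral_const_mul' _ _ ENNReal.ofReal_ne_top]
    _ = ENNReal.ofReal (Real.exp (s * x) * ((1/2) / (1/2 + s)) ^ a) := by
        rw [lintegral_tilt a (1/2) (-s) ha (by norm_num) hrc,
          ← ENNReal.ofReal_mul (Real.exp_nonneg _)]
        norm_num

/-- Chernoff bound for the upper tail of a gamma distribution with rate 1/2. -/
lemma chernoff_Ioi (a x : ℝ) (ha : 0 < a) :
    ((gammaMeasure a (1/2)) (Ioi x)).toReal ≤
      Real.exp (-(x/4)) * 2 ^ a := by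
  have hrc : (0:ℝ) < 1/2 - 1/4 := by norm_num
  have hB : (0:ℝ) ≤ Real.exp (-(x/4)) * 2 ^ a := by positivity
  refine ENNReal.toReal_le_of_le_ofReal hB ?_
  rw [gammaMeasure, withDensity_apply _ measurableSet_Ioi]
  calc ∫⁻ t in Ioi x, gammaPDF a (1/2) t
      ≤ ∫⁻ t in Ioi x, ENNReal.ofReal
          (Real.exp (-(x/4)) * (Real.exp ((1/4) * t) * gammaPDFReal a (1/2) t)) := by
        refine setLIntegral_mono' measurableSet_Ioi fun t ht => ?_
        rw [gammaPDF]
        refine ENNReal.ofReal_le_ofReal ?_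
        have h1 : (1:ℝ) ≤ Real.exp (-(x/4)) * Real.exp ((1/4) * t) := by
          rw [← Real.exp_add]
          apply Real.one_le_exp
          have : x < t := ht
          nlinarith
        have h2 := gammaPDFReal_nonneg (r := (1/2:ℝ)) ha (by norm_num) t
        nlinarith
    _ ≤ ∫⁻ t, ENNReal.ofReal
          (Real.exp (-(x/4)) * (Real.exp ((1/4) * t) * gammaPDFReal a (1/2) t)) :=
        setLIntegral_le_lintegral _ _
    _ = ENNReal.ofReal (Real.exp (-(x/4))) *
          ∫⁻ t, ENNReal.ofReal (Real.exp ((1/4) * t) * gammaPDFReal a (1/2) t) := by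
        simp_rw [ENNReal.ofReal_mul (Real.exp_nonneg (-(x/4)))]
        rw [lintegral_const_mul' _ _ ENNReal.ofReal_ne_top]
    _ = ENNReal.ofReal (Real.exp (-(x/4)) * 2 ^ a) := by
        rw [lintegral_tilt a (1/2) (1/4) ha (by norm_num) hrc,
          ← ENNReal.ofReal_mul (Real.exp_nonneg _)]
        norm_num

/-- `x ^ n ≤ n ! * exp x` for `x ≥ 0`. -/
lemma pow_le_factorial_mul_exp {x : ℝ} (hx : 0 ≤ x) (n : ℕ) :
    x ^ n ≤ (n.factorial : ℝ) * Real.exp x := by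
  have h1 : x ^ n / (n.factorial : ℝ) ≤ Real.exp x := by
    calc x ^ n / (n.factorial : ℝ)
        ≤ ∑ i ∈ Finset.range (n + 1), x ^ i / (i.factorial : ℝ) := by
          refine Finset.single_le_sum (f := fun i => x ^ i / (i.factorial : ℝ))
            (fun i _ => by positivity) (Finset.self_mem_range_succ n)
      _ ≤ Real.exp x := Real.sum_le_exp_of_nonneg hx _
  have hfac : (0:ℝ) < (n.factorial : ℝ) := by positivity
  rw [div_le_iff₀ hfac] at h1
  linarith [h1]

lemma exp_quarter_lt : Real.exp (1/4) < 4/3 := by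
  have h4 : Real.exp (1/4) ^ 4 = Real.exp 1 := by
    rw [← Real.exp_nat_mul]
    norm_num
  have he : Real.exp 1 < (4/3:ℝ) ^ 4 := by
    calc Real.exp 1 < 2.7182818286 := Real.exp_one_lt_d9
      _ < (4/3:ℝ) ^ 4 := by norm_num
  have := pow_lt_pow_iff_left₀ (Real.exp_nonneg (1/4)) (by norm_num : (0:ℝ) ≤ 4/3)
    (by norm_num : 4 ≠ 0)
  rw [← this]
  rw [h4]; exact he

set_option maxHeartbeats 1000000 in
/-- Uniform bound on double alternating binomial sums of chi-squared CDFs at the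
upper-`α` quantile `x_f = χ²_f(α)`. -/
theorem alternating_chiSq_cdf_double_sum_bound
    (h₁ h₂ : ℕ) (hh : (h₁, h₂) = (1, 2) ∨ (h₁, h₂) = (2, 3))
    (α : ℝ) (hα : α ∈ Set.Ioo (0 : ℝ) 1)
    (x : ℕ → ℝ)
    (hx : ∀ f : ℕ, 1 ≤ f → 0 < x f ∧ ((chiSq f) (Set.Ioi (x f))).toReal = α) :
    ∃ C > (0 : ℝ), ∃ F₀ : ℕ, ∀ f : ℕ, F₀ ≤ f → ∀ v₁ v₂ : ℕ, 1 ≤ v₁ → 1 ≤ v₂ →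
      |∑ w₁ ∈ Finset.range (v₁ + 1), ∑ w₂ ∈ Finset.range (v₂ + 1),
          (v₁.choose w₁ : ℝ) * (v₂.choose w₂ : ℝ) *
            (-1 : ℝ) ^ (v₁ - w₁ + (v₂ - w₂)) *
            ((chiSq (2 * f + 2 * h₁ * w₁ + 2 * h₂ * w₂)) (Set.Iic (x f))).toReal| ≤
        (v₁.factorial : ℝ) * (v₂.factorial : ℝ) * C ^ (v₁ + v₂) *
          (f : ℝ) ^ (-((v₁ : ℝ) + (v₂ : ℝ)) / 2) := by
  obtain ⟨hα0, hα1⟩ := hα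
  -- the contraction ratio
  set ρ : ℝ := Real.exp (1/4) * (3/4) with hρdef
  have hρpos : 0 < ρ := by positivity
  have hρlt : ρ < 1 := by
    have := exp_quarter_lt
    nlinarith
  -- c' = log (1/ρ) > 0
  set c' : ℝ := Real.log (4/3) - 1/4 with hc'def
  have hc'pos : 0 < c' := by
    have : (1/4 : ℝ) < Real.log (4/3) := by
      rw [Real.lt_log_iff_exp_lt (by norm_num)]
      exact exp_quarter_lt
    simpa [hc'def] using sub_pos.mpr this
  have hexpc' : Real.exp c' * ρ = 1 := by
    rw [hc'def, hρdef, Real.exp_sub, Real.exp_log (by norm_num : (0:ℝ) < 4/3)]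
    field_simp
  -- d = 3/2 - 2 log 2 > 0
  set d : ℝ := 3/2 - 2 * Real.log 2 with hddef
  have hdpos : 0 < d := by
    have := Real.log_two_lt_d9
    rw [hddef]; nlinarith
  set F₁ : ℕ := ⌈(4 * (-Real.log α)) / d⌉₊ with hF₁
  set F₂ : ℕ := ⌈(2 / c') ^ 2⌉₊ with hF₂
  refine ⟨2, by norm_num, max (max F₁ F₂) 1, fun f hf v₁ v₂ hv₁ hv₂ => ?_⟩
  have hf1 : 1 ≤ f := le_trans (le_max_right _ _) hf
  have hfpos : (0:ℝ) < f := by exact_mod_cast hf1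
  obtain ⟨hxpos, hxα⟩ := hx f hf1
  -- Step 1: quantile bound x f ≤ 3/2 * f
  have hquant : x f ≤ (3/2) * f := by
    have hcher := chernoff_Ioi ((f:ℝ)/2) (x f) (by positivity)
    rw [← chiSq] at hcher
    have hαle : α ≤ Real.exp (-(x f / 4)) * 2 ^ ((f:ℝ)/2) := hxα ▸ hcher
    -- take logs
    have hlog : Real.log α ≤ -(x f / 4) + ((f:ℝ)/2) * Real.log 2 := by
      calc Real.log α ≤ Real.log (Real.exp (-(x f / 4)) * 2 ^ ((f:ℝ)/2)) :=
            Real.log_le_log hα0 hαle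
        _ = -(x f / 4) + ((f:ℝ)/2) * Real.log 2 := by
            rw [Real.log_mul (Real.exp_ne_zero _) (by positivity),
              Real.log_exp, Real.log_rpow (by norm_num)]
    -- f ≥ F₁ gives d * f ≥ 4 * (-log α)
    have hfF₁ : (4 * (-Real.log α)) / d ≤ (f:ℝ) := by
      have h1 : (F₁ : ℝ) ≤ f := by exact_mod_cast le_trans (le_max_left _ _) (le_trans (le_max_left _ _) hf)
      exact le_trans (Nat.le_ceil _) h1
    have h2 : 4 * (-Real.log α) ≤ d * f := by
      rw [div_le_iff₀ hdpos] at hfF₁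
      linarith
    rw [hddef] at h2
    linarith
  -- Step 2: each CDF term ≤ ρ ^ f
  have hterm : ∀ w₁ w₂ : ℕ,
      ((chiSq (2 * f + 2 * h₁ * w₁ + 2 * h₂ * w₂)) (Set.Iic (x f))).toReal ≤ ρ ^ f := by
    intro w₁ w₂
    set m : ℕ := 2 * f + 2 * h₁ * w₁ + 2 * h₂ * w₂ with hm
    have hmpos : (0:ℝ) < (m:ℝ)/2 := by
      have : 1 ≤ m := le_trans hf1 (by omega)
      have : (1:ℝ) ≤ (m:ℝ) := by exact_mod_cast this
      linarith
    have hcher := chernoff_Iic ((m:ℝ)/2) (x f) (1/6) hmpos (by norm_num)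
    rw [← chiSq] at hcher
    have hbase : ((1:ℝ)/2) / (1/2 + 1/6) = 3/4 := by norm_num
    rw [hbase] at hcher
    have hmf : (f : ℝ) ≤ (m:ℝ)/2 := by
      have : 2 * f ≤ m := by omega
      have : (2 * f : ℝ) ≤ (m : ℝ) := by exact_mod_cast this
      linarith
    have h34 : ((3:ℝ)/4) ^ ((m:ℝ)/2) ≤ (3/4 : ℝ) ^ (f:ℝ) :=
      Real.rpow_le_rpow_of_exponent_ge (by norm_num) (by norm_num) hmf
    have hexpx : Real.exp ((1/6) * x f) ≤ Real.exp (1/4) ^ f := by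
      rw [← Real.exp_nat_mul]
      apply Real.exp_le_exp.mpr
      nlinarith
    calc ((chiSq m) (Set.Iic (x f))).toReal
        ≤ Real.exp ((1/6) * x f) * ((3:ℝ)/4) ^ ((m:ℝ)/2) := hcher
      _ ≤ (Real.exp (1/4) ^ f) * ((3/4:ℝ) ^ (f:ℝ)) := by
          apply mul_le_mul hexpx h34 (by positivity) (by positivity)
      _ = ρ ^ f := by
          rw [Real.rpow_natCast, hρdef, mul_pow]
  -- Step 3: triangle inequality: |S| ≤ 2^(v₁+v₂) * ρ^f
  have htri : |∑ w₁ ∈ Finset.range (v₁ + 1), ∑ w₂ ∈ Finset.range (v₂ + 1),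
          (v₁.choose w₁ : ℝ) * (v₂.choose w₂ : ℝ) *
            (-1 : ℝ) ^ (v₁ - w₁ + (v₂ - w₂)) *
            ((chiSq (2 * f + 2 * h₁ * w₁ + 2 * h₂ * w₂)) (Set.Iic (x f))).toReal|
        ≤ 2 ^ (v₁ + v₂) * ρ ^ f := by
    calc |∑ w₁ ∈ Finset.range (v₁ + 1), ∑ w₂ ∈ Finset.range (v₂ + 1),
          (v₁.choose w₁ : ℝ) * (v₂.choose w₂ : ℝ) *
            (-1 : ℝ) ^ (v₁ - w₁ + (v₂ - w₂)) *
            ((chiSq (2 * f + 2 * h₁ * w₁ + 2 * h₂ * w₂)) (Set.Iic (x f))).toReal|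
        ≤ ∑ w₁ ∈ Finset.range (v₁ + 1), ∑ w₂ ∈ Finset.range (v₂ + 1),
            (v₁.choose w₁ : ℝ) * (v₂.choose w₂ : ℝ) * ρ ^ f := by
          refine le_trans (Finset.abs_sum_le_sum_abs _ _) ?_
          refine Finset.sum_le_sum fun w₁ _ => ?_
          refine le_trans (Finset.abs_sum_le_sum_abs _ _) ?_
          refine Finset.sum_le_sum fun w₂ _ => ?_
          rw [abs_mul, abs_mul, abs_mul, abs_pow, abs_neg, abs_one, one_pow, mul_one,
            Nat.abs_cast, Nat.abs_cast,
            abs_of_nonneg ENNReal.toReal_nonneg]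
          exact mul_le_mul_of_nonneg_left (hterm w₁ w₂) (by positivity)
      _ = 2 ^ (v₁ + v₂) * ρ ^ f := by
          have hcs : ∀ n : ℕ, (∑ i ∈ Finset.range (n+1), ((n.choose i : ℕ) : ℝ)) = 2 ^ n := by
            intro n
            rw [← Nat.cast_sum, Nat.sum_range_choose]
            push_cast
            ring
          simp_rw [← Finset.sum_mul]
          rw [← Finset.sum_mul_sum, hcs v₁, hcs v₂, pow_add]
  -- Step 4: ρ^f * (√f)^(v₁+v₂) ≤ v₁! * v₂!
  have hsf : (0:ℝ) ≤ Real.sqrt f := Real.sqrt_nonneg _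
  have hkey : ρ ^ f * Real.sqrt f ^ (v₁ + v₂) ≤ (v₁.factorial : ℝ) * v₂.factorial := by
    have h1 : Real.sqrt f ^ v₁ ≤ (v₁.factorial : ℝ) * Real.exp (Real.sqrt f) :=
      pow_le_factorial_mul_exp hsf v₁
    have h2 : Real.sqrt f ^ v₂ ≤ (v₂.factorial : ℝ) * Real.exp (Real.sqrt f) :=
      pow_le_factorial_mul_exp hsf v₂
    have hfF₂ : ((2:ℝ) / c') ^ 2 ≤ (f:ℝ) := by
      have hF2f : (F₂ : ℝ) ≤ f := by exact_mod_cast le_trans (le_max_right _ _) (le_trans (le_max_left _ _) hf)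
      exact le_trans (Nat.le_ceil _) hF2f
    have hsq : 2 / c' ≤ Real.sqrt f := by
      rw [Real.le_sqrt (by positivity) (le_of_lt hfpos)]
      exact hfF₂
    have hsf2 : 2 * Real.sqrt f ≤ c' * f := by
      have hss : Real.sqrt f * Real.sqrt f = (f:ℝ) := Real.mul_self_sqrt hfpos.le
      have h3 : 2 ≤ c' * Real.sqrt f := by
        rw [div_le_iff₀ hc'pos] at hsq
        nlinarith [hsq]
      calc 2 * Real.sqrt f ≤ (c' * Real.sqrt f) * Real.sqrt f := by
            nlinarith [Real.sqrt_nonneg (f:ℝ)]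
        _ = c' * f := by rw [mul_assoc, hss]
    have hexp2 : ρ ^ f * Real.exp (Real.sqrt f) ^ 2 ≤ 1 := by
      have he : Real.exp (Real.sqrt f) ^ 2 = Real.exp (2 * Real.sqrt f) := by
        rw [sq, ← Real.exp_add]; ring_nf
      have he2 : Real.exp (2 * Real.sqrt f) ≤ Real.exp (c' * f) :=
        Real.exp_le_exp.mpr hsf2
      have he3 : Real.exp (c' * f) = Real.exp c' ^ f := by
        rw [mul_comm, Real.exp_nat_mul]
      have he4 : ρ ^ f * Real.exp c' ^ f = 1 := by
        rw [← mul_pow, mul_comm ρ, hexpc', one_pow]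
      calc ρ ^ f * Real.exp (Real.sqrt f) ^ 2
          ≤ ρ ^ f * Real.exp c' ^ f := by
            rw [he]
            exact mul_le_mul_of_nonneg_left (he2.trans_eq he3) (by positivity)
        _ = 1 := he4
    calc ρ ^ f * Real.sqrt f ^ (v₁ + v₂)
        = ρ ^ f * (Real.sqrt f ^ v₁ * Real.sqrt f ^ v₂) := by rw [pow_add]
      _ ≤ ρ ^ f * (((v₁.factorial : ℝ) * Real.exp (Real.sqrt f)) *
            ((v₂.factorial : ℝ) * Real.exp (Real.sqrt f))) := by
          refine mul_le_mul_of_nonneg_left ?_ (by positivity)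
          exact mul_le_mul h1 h2 (by positivity) (by positivity)
      _ = ((v₁.factorial : ℝ) * v₂.factorial) * (ρ ^ f * Real.exp (Real.sqrt f) ^ 2) := by
          ring
      _ ≤ ((v₁.factorial : ℝ) * v₂.factorial) * 1 := by
          refine mul_le_mul_of_nonneg_left hexp2 (by positivity)
      _ = (v₁.factorial : ℝ) * v₂.factorial := mul_one _
  -- Step 5: conclude
  have hrpow : (f : ℝ) ^ (-((v₁ : ℝ) + (v₂ : ℝ)) / 2) =
      (Real.sqrt f ^ (v₁ + v₂))⁻¹ := by
    rw [Real.sqrt_eq_rpow, ← Real.rpow_natCast ((f:ℝ) ^ ((1:ℝ)/2)) (v₁ + v₂),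
      ← Real.rpow_mul hfpos.le, ← Real.rpow_neg hfpos.le]
    congr 1
    push_cast
    ring
  have hsfpos : (0:ℝ) < Real.sqrt f ^ (v₁ + v₂) := by
    apply pow_pos (Real.sqrt_pos.mpr hfpos)
  calc |∑ w₁ ∈ Finset.range (v₁ + 1), ∑ w₂ ∈ Finset.range (v₂ + 1),
          (v₁.choose w₁ : ℝ) * (v₂.choose w₂ : ℝ) *
            (-1 : ℝ) ^ (v₁ - w₁ + (v₂ - w₂)) *
            ((chiSq (2 * f + 2 * h₁ * w₁ + 2 * h₂ * w₂)) (Set.Iic (x f))).toReal|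
      ≤ 2 ^ (v₁ + v₂) * ρ ^ f := htri
    _ ≤ 2 ^ (v₁ + v₂) * (((v₁.factorial : ℝ) * v₂.factorial) * (Real.sqrt f ^ (v₁ + v₂))⁻¹) := by
        refine mul_le_mul_of_nonneg_left ?_ (by positivity)
        rw [le_mul_inv_iff₀ hsfpos]
        linarith [hkey]
    _ = (v₁.factorial : ℝ) * (v₂.factorial : ℝ) * 2 ^ (v₁ + v₂) *
          (f : ℝ) ^ (-((v₁ : ℝ) + (v₂ : ℝ)) / 2) := by
        rw [hrpow]; ring

end
end

section
/- For every real x > 0 and all positive integers f and h, P(χ²_{f+2h} ≤ x) − P(χ²_f ≤ x) = − ∑_{k=1}^{h} (x/2)^{f/2 + h − k} · e^{−x/2} / Γ(f/2 + h − k + 1), where Γ is the real gamma function. -/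
open MeasureTheory ProbabilityTheory Set

noncomputable section

/-! The gamma densities `p_a` of rate `r` satisfy `p_{a+1}' = r (p_a - p_{a+1})` on `(0, ∞)`, and
`p_{a+1}(0) = 0`. Integrating over `[0, x]` gives `F_{a+1}(x) - F_a(x) = -p_{a+1}(x) / r
= -(r x)^a e^{-r x} / Γ(a + 1)` for the CDFs. Raising the degrees of freedom by `2h` raises the
shape `f/2` by `h` unit steps, and the formula telescopes. -/

lemma Finset.sum_range_eq_sum_Icc_sub {M : Type*} [AddCommMonoid M] (g : ℕ → M) (n : ℕ) :
    ∑ j ∈ range n, g j = ∑ k ∈ Icc 1 n, g (n - k) := by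
  refine sum_nbij' (n - ·) (n - ·) ?_ ?_ ?_ ?_ ?_ <;> grind

namespace ProbabilityTheory

open Real

variable {a r : ℝ}

lemma gammaPDFReal_of_nonneg {x : ℝ} (hx : 0 ≤ x) :
    gammaPDFReal a r x = r ^ a / Gamma a * x ^ (a - 1) * exp (-(r * x)) :=
  if_pos hx

lemma integrable_gammaPDFReal (ha : 0 < a) (hr : 0 < r) : Integrable (gammaPDFReal a r) :=
  ⟨(measurable_gammaPDFReal a r).aestronglyMeasurable,
    (hasFiniteIntegral_iff_ofReal (ae_of_all _ (gammaPDFReal_nonneg ha hr))).2 <| by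
      simpa [gammaPDF] using (lintegral_gammaPDF_eq_one ha hr).trans_lt ENNReal.one_lt_top⟩

lemma cdf_gammaMeasure_eq_intervalIntegral (ha : 0 < a) (hr : 0 < r) (x : ℝ) :
    cdf (gammaMeasure a r) x = ∫ t in 0..x, gammaPDFReal a r t := by
  have hneg : ∫ t in Iic 0, gammaPDFReal a r t = 0 := by
    rw [integral_Iic_eq_integral_Iio]
    exact setIntegral_eq_zero_of_forall_eq_zero fun t (ht : t < 0) ↦ by
      simp [gammaPDFReal, not_le.2 ht]
  rw [cdf_gammaMeasure_eq_integral ha hr, ← intervalIntegral.integral_Iic_sub_Iic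
    (integrable_gammaPDFReal ha hr).integrableOn (integrable_gammaPDFReal ha hr).integrableOn,
    hneg, sub_zero]

lemma hasDerivAt_gammaPDFReal_add_one (ha : 0 < a) (hr : 0 < r) {t : ℝ} (ht : 0 < t) :
    HasDerivAt (gammaPDFReal (a + 1) r)
      (r * (gammaPDFReal a r t - gammaPDFReal (a + 1) r t)) t := by
  have hpow : HasDerivAt (fun s : ℝ ↦ s ^ a) (a * t ^ (a - 1)) t :=
    hasDerivAt_rpow_const (Or.inl ht.ne')
  have hexp : HasDerivAt (fun s : ℝ ↦ exp (-(r * s))) (exp (-(r * t)) * -r) t := by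
    simpa using ((hasDerivAt_id t).const_mul r).neg.exp
  have hformula := (hpow.mul hexp).const_mul (r ^ (a + 1) / Gamma (a + 1))
  refine (hformula.congr_of_eventuallyEq ?_).congr_deriv ?_
  · filter_upwards [lt_mem_nhds ht] with s hs
    rw [gammaPDFReal_of_nonneg hs.le, add_sub_cancel_right, mul_assoc, Pi.mul_apply]
  · rw [gammaPDFReal_of_nonneg ht.le, gammaPDFReal_of_nonneg ht.le, add_sub_cancel_right,
      Gamma_add_one ha.ne', rpow_add_one hr.ne', rpow_sub_one ht.ne']
    have := (Gamma_pos_of_pos ha).ne'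
    field_simp
    ring

lemma continuousOn_gammaPDFReal (ha : 1 ≤ a) : ContinuousOn (gammaPDFReal a r) (Ici 0) :=
  ((continuous_const.mul (continuous_rpow_const (by linarith))).mul
    (continuous_const.mul continuous_id).neg.rexp).continuousOn.congr
    fun _ ht ↦ gammaPDFReal_of_nonneg ht

lemma cdf_gammaMeasure_add_one_sub (ha : 0 < a) (hr : 0 < r) {x : ℝ} (hx : 0 ≤ x) :
    cdf (gammaMeasure (a + 1) r) x - cdf (gammaMeasure a r) x =
      -((r * x) ^ a * exp (-(r * x)) / Gamma (a + 1)) := by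
  have hint (b : ℝ) (hb : 0 < b) : IntervalIntegrable (gammaPDFReal b r) volume 0 x :=
    (integrable_gammaPDFReal hb hr).intervalIntegrable
  have hftc : r * (cdf (gammaMeasure a r) x - cdf (gammaMeasure (a + 1) r) x) =
      gammaPDFReal (a + 1) r x := by
    rw [cdf_gammaMeasure_eq_intervalIntegral ha hr,
      cdf_gammaMeasure_eq_intervalIntegral (by linarith) hr,
      ← intervalIntegral.integral_sub (hint a ha) (hint (a + 1) (by linarith)),
      ← intervalIntegral.integral_const_mul,
      intervalIntegral.integral_eq_sub_of_hasDerivAt_of_le hx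
        ((continuousOn_gammaPDFReal (by linarith)).mono Icc_subset_Ici_self)
        (fun t ht ↦ hasDerivAt_gammaPDFReal_add_one ha hr ht.1)
        (((hint a ha).sub (hint (a + 1) (by linarith))).const_mul r),
      gammaPDFReal_of_nonneg le_rfl, add_sub_cancel_right, zero_rpow ha.ne']
    simp
  have hclosed :
      gammaPDFReal (a + 1) r x = r * ((r * x) ^ a * exp (-(r * x)) / Gamma (a + 1)) := by
    rw [gammaPDFReal_of_nonneg hx, add_sub_cancel_right, mul_rpow hr.le hx, rpow_add_one hr.ne']
    ring
  rw [hclosed] at hftc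
  linarith [mul_left_cancel₀ hr.ne' hftc]

lemma cdf_gammaMeasure_add_nat_sub (ha : 0 < a) (hr : 0 < r) {x : ℝ} (hx : 0 ≤ x) (n : ℕ) :
    cdf (gammaMeasure (a + n) r) x - cdf (gammaMeasure a r) x =
      -∑ j ∈ Finset.range n, (r * x) ^ (a + j) * exp (-(r * x)) / Gamma (a + j + 1) := by
  have := Finset.sum_range_sub (fun j : ℕ ↦ cdf (gammaMeasure (a + j) r) x) n
  rw [Nat.cast_zero, add_zero] at this
  rw [← this, ← Finset.sum_neg_distrib]
  refine Finset.sum_congr rfl fun j _ ↦ ?_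
  rw [Nat.cast_succ, ← add_assoc, cdf_gammaMeasure_add_one_sub (by positivity) hr hx]

end ProbabilityTheory

theorem chiSq_cdf_diff_exact_general
    (f h : ℕ) (hf : 0 < f) (x : ℝ) (hx : 0 < x) :
    ((chiSq (f + 2 * h)) (Set.Iic x)).toReal - ((chiSq f) (Set.Iic x)).toReal =
      -∑ k ∈ Finset.Icc 1 h,
        (x / 2) ^ ((f : ℝ) / 2 + (h : ℝ) - (k : ℝ)) * Real.exp (-x / 2) /
          Real.Gamma ((f : ℝ) / 2 + (h : ℝ) - (k : ℝ) + 1) := by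
  have hshape : (0 : ℝ) < f / 2 := by positivity
  have hdof : ((f + 2 * h : ℕ) : ℝ) / 2 = f / 2 + h := by push_cast; ring
  have := isProbabilityMeasure_gammaMeasure hshape one_half_pos
  have := isProbabilityMeasure_gammaMeasure (by positivity : (0 : ℝ) < f / 2 + h) one_half_pos
  rw [chiSq, chiSq, hdof, ← measureReal_def, ← measureReal_def, ← cdf_eq_real, ← cdf_eq_real,
    cdf_gammaMeasure_add_nat_sub hshape one_half_pos hx.le h, neg_inj,
    Finset.sum_range_eq_sum_Icc_sub]
  refine Finset.sum_congr rfl fun k hk ↦ ?_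
  rw [Nat.cast_sub (Finset.mem_Icc.1 hk).2]
  ring_nf

/-- Exact formula for the difference of chi-squared CDFs with degrees of freedom
differing by an even integer `2h`. -/
theorem chiSq_cdf_diff_exact
    (f h : ℕ) (hf : 0 < f) (hh : 0 < h) (x : ℝ) (hx : 0 < x) :
    ((chiSq (f + 2 * h)) (Set.Iic x)).toReal - ((chiSq f) (Set.Iic x)).toReal =
      -∑ k ∈ Finset.Icc 1 h,
        (x / 2) ^ ((f : ℝ) / 2 + (h : ℝ) - (k : ℝ)) * Real.exp (-x / 2) /
          Real.Gamma ((f : ℝ) / 2 + (h : ℝ) - (k : ℝ) + 1) :=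
  chiSq_cdf_diff_exact_general f h hf x hx

end
end

section
/- Let (x_n) be a sequence of positive real numbers with x_n → ∞ and (b_n) a sequence of real numbers with b_n/x_n → 0 as n → ∞. Then there exist a constant C > 0 and N such that for all n ≥ N there is a complex number r_n with |r_n| ≤ C · (|b_n| + b_n²)/x_n² and Γ(x_n + i b_n)/Γ(x_n) = exp( (x_n + i b_n) Log(x_n + i b_n) − x_n log x_n − i b_n − i b_n/(2 x_n) + r_n ), where Γ is the complex gamma function and Log denotes the principal branch of the complex logarithm. -/
/-!
Write `S w = (w - 1/2) log w - w` for the logarithm of Stirling's main term and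
`g w = (w + 1/2) (log (w + 1) - log w) - 1` for the terms of Gudermann's series, so that
`S (w + 1) = S w + log w + g w`. Telescoping Euler's limit
`Γ(s) = lim n^s n! / (s (s+1) ⋯ (s+n))` with this identity gives
`Γ(z)/Γ(w) = exp (S z - S w + ∑ⱼ (g (z + j) - g (w + j)))`.
For `z = x + ib`, `S z - S x` is the claimed main term up to `-(log (1 + u) - u)/2` with
`u = ib/x`, which is `O(b²/x²)`. Since `|g'(w)| ≤ 2/|w|³` for `|w| ≥ 2`, the mean value theorem
on the vertical segment bounds the series by `2|b| ∑ⱼ (x + j)⁻³ ≤ 4|b|/x²`.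
-/

open Filter Topology Complex

noncomputable section

namespace Complex

def stirlingMainTerm (w : ℂ) : ℂ := (w - 1 / 2) * log w - w

def gudermannTerm (w : ℂ) : ℂ := (w + 1 / 2) * (log (w + 1) - log w) - 1

theorem stirlingMainTerm_add_one (w : ℂ) :
    stirlingMainTerm (w + 1) = stirlingMainTerm w + log w + gudermannTerm w := by
  unfold stirlingMainTerm gudermannTerm
  ring

theorem sum_range_log_add_natCast (w : ℂ) (m : ℕ) :
    ∑ j ∈ Finset.range m, log (w + j) =
      stirlingMainTerm (w + m) - stirlingMainTerm w -
        ∑ j ∈ Finset.range m, gudermannTerm (w + j) := by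
  induction m with
  | zero => simp
  | succ m ih =>
    rw [Finset.sum_range_succ, Finset.sum_range_succ, ih, Nat.cast_succ, ← add_assoc,
      stirlingMainTerm_add_one]
    ring

theorem GammaSeq_eq_factorial_mul_exp {s : ℂ} (hs : 0 < s.re) {m : ℕ} (hm : m ≠ 0) :
    GammaSeq s m = m.factorial * exp (log m * s - ∑ j ∈ Finset.range (m + 1), log (s + j)) := by
  have hterm : ∀ j : ℕ, s + j ≠ 0 := fun j h => by
    have := congrArg re h
    simp only [add_re, natCast_re, zero_re] at this
    linarith [j.cast_nonneg (α := ℝ)]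
  rw [GammaSeq, cpow_def_of_ne_zero (Nat.cast_ne_zero.2 hm), exp_sub, exp_sum,
    Finset.prod_congr rfl fun j _ => exp_log (hterm j)]
  ring

theorem eventually_log_natCast_add (c : ℂ) :
    ∀ᶠ m : ℕ in atTop, log (m + c) = log m + log (1 + c / m) := by
  filter_upwards [eventually_gt_atTop ⌊‖c‖⌋₊] with m hm
  have hm0 : (0 : ℝ) < m := Nat.cast_pos.2 (by omega)
  have hcm : ‖c / m‖ < 1 := by
    rw [norm_div, norm_natCast, div_lt_one hm0]
    exact Nat.lt_of_floor_lt hm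
  have hne : 1 + c / m ≠ 0 := fun h => by
    rw [eq_neg_of_add_eq_zero_right h, norm_neg, norm_one] at hcm
    exact lt_irrefl _ hcm
  rw [← natCast_log, ← log_ofReal_mul hm0 hne]
  push_cast
  rw [mul_add, mul_one, mul_div_cancel₀ c (by exact_mod_cast hm0.ne')]

theorem tendsto_natCast_add_mul_log_one_add_div (a c : ℂ) :
    Tendsto (fun m : ℕ => (m + a) * log (1 + c / m)) atTop (𝓝 c) := by
  have hinv : Tendsto (fun m : ℕ => (m : ℂ)⁻¹) atTop (𝓝 0) := by
    simpa using (tendsto_inv_atTop_zero.comp tendsto_natCast_atTop_atTop).ofReal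
  have hmul : Tendsto (fun m : ℕ => m * log (1 + c / m)) atTop (𝓝 c) := by
    refine tendsto_nat_mul_log_one_add_of_tendsto (tendsto_const_nhds.congr' ?_)
    filter_upwards [eventually_ne_atTop 0] with m hm
    field_simp
  have := ((hinv.const_mul a).const_add 1).mul hmul
  rw [mul_zero, add_zero, one_mul] at this
  refine this.congr' ?_
  filter_upwards [eventually_ne_atTop 0] with m hm
  field_simp

theorem tendsto_stirlingMainTerm_add_natCast (w : ℂ) :
    Tendsto (fun m : ℕ => stirlingMainTerm (w + m + 1) - (w + m + 1 / 2) * log m + m)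
      atTop (𝓝 0) := by
  have := (tendsto_natCast_add_mul_log_one_add_div (w + 1 / 2) (w + 1)).sub_const (w + 1)
  rw [sub_self] at this
  refine this.congr' ?_
  filter_upwards [eventually_log_natCast_add (w + 1)] with m hm
  rw [stirlingMainTerm, show w + m + 1 = m + (w + 1) by ring, hm]
  ring

theorem Gamma_div_Gamma_eq_exp_of_hasSum {z w T : ℂ} (hz : 0 < z.re) (hw : 0 < w.re)
    (hT : HasSum (fun j : ℕ => gudermannTerm (z + j) - gudermannTerm (w + j)) T) :
    Gamma z / Gamma w = exp (stirlingMainTerm z - stirlingMainTerm w + T) := by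
  have hseq : Tendsto (fun m => GammaSeq z m / GammaSeq w m) atTop (𝓝 (Gamma z / Gamma w)) :=
    (GammaSeq_tendsto_Gamma z).div (GammaSeq_tendsto_Gamma w) (Gamma_ne_zero_of_re_pos hw)
  have hexponent : Tendsto (fun m : ℕ =>
      stirlingMainTerm z - stirlingMainTerm w +
        ∑ j ∈ Finset.range (m + 1), (gudermannTerm (z + j) - gudermannTerm (w + j)) -
        ((stirlingMainTerm (z + m + 1) - (z + m + 1 / 2) * log m + m) -
          (stirlingMainTerm (w + m + 1) - (w + m + 1 / 2) * log m + m)))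
      atTop (𝓝 (stirlingMainTerm z - stirlingMainTerm w + T)) := by
    have := ((hT.tendsto_sum_nat.comp (tendsto_add_atTop_nat 1)).const_add
      (stirlingMainTerm z - stirlingMainTerm w)).sub
      ((tendsto_stirlingMainTerm_add_natCast z).sub (tendsto_stirlingMainTerm_add_natCast w))
    rwa [sub_zero, sub_zero] at this
  refine tendsto_nhds_unique hseq (((continuous_exp.tendsto _).comp hexponent).congr' ?_)
  filter_upwards [eventually_ne_atTop 0] with m hm
  rw [Function.comp_apply, GammaSeq_eq_factorial_mul_exp hz hm,
    GammaSeq_eq_factorial_mul_exp hw hm,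
    mul_div_mul_left _ _ (Nat.cast_ne_zero.2 m.factorial_ne_zero), ← exp_sub,
    sum_range_log_add_natCast, sum_range_log_add_natCast, Finset.sum_sub_distrib]
  push_cast
  simp only [← add_assoc]
  congr 1
  ring

theorem log_add_one_sub_log {w : ℂ} (hw : 0 < w.re) : log (w + 1) - log w = log (1 + w⁻¹) := by
  have hw0 : w ≠ 0 := fun h => by simp [h] at hw
  have hre : 0 < (1 + w⁻¹).re := by
    rw [add_re, one_re, inv_re]
    have := normSq_pos.2 hw0
    positivity
  have hsum : log (w * (1 + w⁻¹)) = log w + log (1 + w⁻¹) := by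
    rw [log_mul_eq_add_log_iff hw0 (fun h => by simp [h] at hre)]
    have h1 := abs_lt.1 (abs_arg_lt_pi_div_two_iff.2 (Or.inl hw))
    have h2 := abs_lt.1 (abs_arg_lt_pi_div_two_iff.2 (Or.inl hre))
    constructor <;> linarith [h1.1, h1.2, h2.1, h2.2]
  rw [mul_add, mul_one, mul_inv_cancel₀ hw0] at hsum
  rw [hsum]
  ring

theorem hasDerivAt_gudermannTerm {w : ℂ} (hw : 0 < w.re) :
    HasDerivAt gudermannTerm (log (1 + w⁻¹) - (w + 1 / 2) / (w * (w + 1))) w := by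
  have hw0 : w ≠ 0 := fun h => by simp [h] at hw
  have hw1 : 0 < (w + 1).re := by rw [add_re, one_re]; linarith
  have hw10 : w + 1 ≠ 0 := fun h => by simp [h] at hw1
  have hlog1 : HasDerivAt (fun y : ℂ => log (y + 1)) (w + 1)⁻¹ w :=
    (hasDerivAt_log (Or.inl hw1)).comp_add_const w 1
  refine ((((hasDerivAt_id' w).add_const (1 / 2)).mul
    (hlog1.sub (hasDerivAt_log (Or.inl hw)))).sub_const 1).congr_deriv ?_
  rw [Pi.sub_apply, ← log_add_one_sub_log hw]
  field_simp
  ring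

theorem norm_log_one_add_inv_sub_le {w : ℂ} (hw : 2 ≤ ‖w‖) :
    ‖log (1 + w⁻¹) - (w + 1 / 2) / (w * (w + 1))‖ ≤ 2 / ‖w‖ ^ 3 := by
  have hw0 : w ≠ 0 := norm_pos_iff.1 (by linarith)
  have hw1 : w + 1 ≠ 0 := fun h => by
    rw [eq_neg_of_add_eq_zero_left h, norm_neg, norm_one] at hw
    norm_num at hw
  set v := w⁻¹ with hv
  have hnv : ‖v‖ ≤ 1 / 2 := by
    rw [hv, norm_inv]
    exact inv_le_of_inv_le₀ (by norm_num) (by norm_num; linarith)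
  have hv1 : (1 - ‖v‖)⁻¹ ≤ 2 := by
    rw [inv_le_comm₀ (by linarith) two_pos]
    linarith
  have h1v : 1 + v ≠ 0 := fun h => by
    rw [eq_neg_of_add_eq_zero_right h, norm_neg, norm_one] at hnv
    norm_num at hnv
  have hlogTaylor : logTaylor 3 v = v - v ^ 2 / 2 := by
    norm_num [logTaylor, Finset.sum_range_succ]
    ring
  have hsplit : (w + 1 / 2) / (w * (w + 1)) = logTaylor 3 v + v ^ 3 / (2 * (1 + v)) := by
    rw [hlogTaylor, hv]
    field_simp
    ring
  have htaylor : ‖log (1 + v) - logTaylor 3 v‖ ≤ 2 / 3 * ‖v‖ ^ 3 := by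
    have := norm_log_sub_logTaylor_le 2 (by linarith : ‖v‖ < 1)
    norm_num at this
    calc _ ≤ ‖v‖ ^ 3 * (1 - ‖v‖)⁻¹ / 3 := this
      _ ≤ ‖v‖ ^ 3 * 2 / 3 := by gcongr
      _ = 2 / 3 * ‖v‖ ^ 3 := by ring
  have hrest : ‖v ^ 3 / (2 * (1 + v))‖ ≤ ‖v‖ ^ 3 := by
    have h1v' : 1 ≤ 2 * ‖1 + v‖ := by
      have := norm_sub_le (1 + v) v
      rw [add_sub_cancel_right, norm_one] at this
      linarith
    rw [norm_div, norm_mul, norm_pow, RCLike.norm_ofNat]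
    exact div_le_self (by positivity) h1v'
  calc _ ≤ 2 / 3 * ‖v‖ ^ 3 + ‖v‖ ^ 3 := by
        rw [hsplit, ← sub_sub]
        exact (norm_sub_le _ _).trans (add_le_add htaylor hrest)
    _ ≤ 2 * ‖v‖ ^ 3 := by linarith [pow_nonneg (norm_nonneg v) 3]
    _ = 2 / ‖w‖ ^ 3 := by rw [hv, norm_inv, inv_pow, div_eq_mul_inv]

theorem norm_gudermannTerm_add_I_mul_sub_le {x : ℝ} (hx : 2 ≤ x) (B : ℝ) :
    ‖gudermannTerm (x + I * B) - gudermannTerm x‖ ≤ 2 * |B| / x ^ 3 := by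
  have hderiv : ∀ w ∈ {w : ℂ | x ≤ w.re}, HasDerivWithinAt gudermannTerm
      (log (1 + w⁻¹) - (w + 1 / 2) / (w * (w + 1))) {w : ℂ | x ≤ w.re} w :=
    fun w (hw : x ≤ w.re) => (hasDerivAt_gudermannTerm (by linarith)).hasDerivWithinAt
  have hbound : ∀ w ∈ {w : ℂ | x ≤ w.re},
      ‖log (1 + w⁻¹) - (w + 1 / 2) / (w * (w + 1))‖ ≤ 2 / x ^ 3 := by
    intro w (hw : x ≤ w.re)
    have hxw : x ≤ ‖w‖ := hw.trans (re_le_norm w)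
    calc _ ≤ 2 / ‖w‖ ^ 3 := norm_log_one_add_inv_sub_le (hx.trans hxw)
      _ ≤ 2 / x ^ 3 := by gcongr
  have := (convex_halfSpace_re_ge x).norm_image_sub_le_of_norm_hasDerivWithin_le hderiv hbound
    (x := (x : ℂ)) (y := x + I * B) (by simp) (by simp)
  simpa [mul_comm, mul_div_assoc] using this

theorem sum_range_one_div_add_natCast_pow_three_le {x : ℝ} (hx : 2 ≤ x) (n : ℕ) :
    ∑ j ∈ Finset.range n, 1 / (x + j) ^ 3 ≤ 2 / x ^ 2 := by
  have hx0 : 0 < x - 1 := by linarith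
  calc ∑ j ∈ Finset.range n, 1 / (x + j) ^ 3
      ≤ ∑ j ∈ Finset.range n, (1 / (x - 1 + j) - 1 / (x - 1 + (j + 1 : ℕ))) / x := by
        refine Finset.sum_le_sum fun j _ => ?_
        have hj : (0 : ℝ) ≤ j := j.cast_nonneg
        have hsq : (x - 1 + j) * x ≤ (x + j) ^ 2 := by nlinarith
        rw [Nat.cast_succ, show x - 1 + (j + 1) = x + j by ring,
          div_sub_div _ _ (by positivity) (by positivity), div_div,
          div_le_div_iff₀ (by positivity) (by positivity)]
        nlinarith [mul_le_mul_of_nonneg_left hsq (by positivity : (0 : ℝ) ≤ x + j)]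
    _ = (1 / (x - 1) - 1 / (x - 1 + n)) / x := by
        rw [← Finset.sum_div, Finset.sum_range_sub' (fun j : ℕ => 1 / (x - 1 + j)), Nat.cast_zero,
          add_zero]
    _ ≤ 1 / (x - 1) / x := by gcongr; exact sub_le_self _ (by positivity)
    _ ≤ 2 / x ^ 2 := by
        rw [div_div, div_le_div_iff₀ (by positivity) (by positivity)]
        nlinarith

theorem exists_hasSum_gudermannTerm_add_I_mul_sub {x : ℝ} (hx : 2 ≤ x) (B : ℝ) :
    ∃ T, HasSum (fun j : ℕ => gudermannTerm (x + I * B + j) - gudermannTerm (x + j)) T ∧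
      ‖T‖ ≤ 4 * |B| / x ^ 2 := by
  have hpos : ∀ j : ℕ, 0 ≤ 1 / (x + j) ^ 3 := fun j => by positivity
  have hsum : Summable fun j : ℕ => 1 / (x + j) ^ 3 :=
    summable_of_sum_range_le hpos (sum_range_one_div_add_natCast_pow_three_le hx)
  have hterm : ∀ j : ℕ, ‖gudermannTerm (x + I * B + j) - gudermannTerm (x + j)‖ ≤
      2 * |B| * (1 / (x + j) ^ 3) := fun j => by
    have := norm_gudermannTerm_add_I_mul_sub_le (x := x + j)
      (by linarith [j.cast_nonneg (α := ℝ)]) B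
    push_cast at this
    rwa [add_right_comm, mul_one_div]
  refine ⟨_, (Summable.of_norm_bounded (hsum.mul_left _) hterm).hasSum, ?_⟩
  calc _ ≤ ∑' j : ℕ, 2 * |B| * (1 / (x + j) ^ 3) :=
        tsum_of_norm_bounded (hsum.mul_left _).hasSum hterm
    _ = 2 * |B| * ∑' j : ℕ, 1 / (x + j) ^ 3 := tsum_mul_left
    _ ≤ 2 * |B| * (2 / x ^ 2) := by
        gcongr
        exact Real.tsum_le_of_sum_range_le hpos (sum_range_one_div_add_natCast_pow_three_le hx)
    _ = 4 * |B| / x ^ 2 := by ring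

theorem norm_stirlingMainTerm_add_I_mul_sub_le {x : ℝ} (hx : 0 < x) {B : ℝ} (hB : |B| ≤ x / 2) :
    ‖stirlingMainTerm (x + I * B) - stirlingMainTerm x -
      ((x + I * B) * log (x + I * B) - x * Real.log x - I * B - I * B / (2 * x))‖ ≤
        B ^ 2 / (2 * x ^ 2) := by
  set u : ℂ := I * B / x with hu
  have hx0 : (x : ℂ) ≠ 0 := ofReal_ne_zero.2 hx.ne'
  have hnu : ‖u‖ = |B| / x := by simp [hu, abs_of_pos hx]
  have hnu2 : ‖u‖ ≤ 1 / 2 := by rw [hnu, div_le_iff₀ hx]; linarith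
  have hu1 : 1 + u ≠ 0 := fun h => by
    rw [eq_neg_of_add_eq_zero_right h, norm_neg, norm_one] at hnu2
    norm_num at hnu2
  have hlog : log (x + I * B) = Real.log x + log (1 + u) := by
    rw [← log_ofReal_mul hx hu1, hu, mul_add, mul_one, mul_div_cancel₀ _ hx0]
  have hdiff : stirlingMainTerm (x + I * B) - stirlingMainTerm x -
      ((x + I * B) * log (x + I * B) - x * Real.log x - I * B - I * B / (2 * x)) =
        -(log (1 + u) - u) / 2 := by
    rw [stirlingMainTerm, stirlingMainTerm, hlog, ← ofReal_log hx.le, hu]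
    field_simp
    ring
  have hsq : ‖log (1 + u) - u‖ ≤ ‖u‖ ^ 2 := by
    have h2 : (1 - ‖u‖)⁻¹ ≤ 2 := by
      rw [inv_le_comm₀ (by linarith) two_pos]
      linarith
    calc _ ≤ ‖u‖ ^ 2 * (1 - ‖u‖)⁻¹ / 2 := norm_log_one_add_sub_self_le (by linarith)
      _ ≤ ‖u‖ ^ 2 * 2 / 2 := by gcongr
      _ = ‖u‖ ^ 2 := by ring
  rw [hdiff, norm_div, norm_neg, RCLike.norm_ofNat]
  calc _ ≤ ‖u‖ ^ 2 / 2 := by gcongr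
    _ = B ^ 2 / (2 * x ^ 2) := by rw [hnu, div_pow, sq_abs]; ring

theorem Gamma_ofReal_add_I_mul_div_Gamma_ofReal {x B : ℝ} (hx : 2 ≤ x) (hB : |B| ≤ x / 2) :
    ∃ r : ℂ, ‖r‖ ≤ 4 * (|B| + B ^ 2) / x ^ 2 ∧
      Gamma (x + I * B) / Gamma x =
        exp ((x + I * B) * log (x + I * B) - x * Real.log x - I * B - I * B / (2 * x) + r) := by
  have hx0 : 0 < x := by linarith
  obtain ⟨T, hT, hTle⟩ := exists_hasSum_gudermannTerm_add_I_mul_sub hx B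
  set M := (x + I * B) * log (x + I * B) - x * Real.log x - I * B - I * B / (2 * x)
  refine ⟨stirlingMainTerm (x + I * B) - stirlingMainTerm x - M + T, ?_, ?_⟩
  · calc _ ≤ B ^ 2 / (2 * x ^ 2) + 4 * |B| / x ^ 2 :=
          (norm_add_le _ _).trans
            (add_le_add (norm_stirlingMainTerm_add_I_mul_sub_le hx0 hB) hTle)
      _ ≤ 4 * (|B| + B ^ 2) / x ^ 2 := by
          have : B ^ 2 / (2 * x ^ 2) ≤ 4 * B ^ 2 / x ^ 2 := by
            rw [div_le_div_iff₀ (by positivity) (by positivity)]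
            nlinarith [mul_nonneg (sq_nonneg B) (sq_nonneg x)]
          rw [mul_add, add_div]
          linarith
  · rw [Gamma_div_Gamma_eq_exp_of_hasSum (by simpa using hx0) (by simpa using hx0) hT]
    congr 1
    ring

end Complex

theorem gamma_ratio_imaginary_shift_expansion_general
    (x : ℕ → ℝ)
    (hxInf : Tendsto x atTop atTop)
    (b : ℕ → ℝ)
    (hbx : Tendsto (fun n => b n / x n) atTop (nhds 0)) :
    ∃ C > (0 : ℝ), ∃ N : ℕ, ∀ n ≥ N, ∃ r : ℂ,
      ‖r‖ ≤ C * (|b n| + (b n) ^ 2) / (x n) ^ 2 ∧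
      Complex.Gamma ((x n : ℂ) + Complex.I * (b n : ℂ)) / Complex.Gamma ((x n : ℂ)) =
        Complex.exp (((x n : ℂ) + Complex.I * (b n : ℂ)) *
            Complex.log ((x n : ℂ) + Complex.I * (b n : ℂ)) -
          (x n : ℂ) * (Real.log (x n) : ℂ) - Complex.I * (b n : ℂ) -
          Complex.I * (b n : ℂ) / (2 * (x n : ℂ)) + r) := by
  have hlarge : ∀ᶠ n in atTop, 2 ≤ x n := hxInf.eventually_ge_atTop 2
  have hsmall : ∀ᶠ n in atTop, |b n / x n| ≤ 1 / 2 := by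
    simpa using hbx.abs.eventually (ge_mem_nhds (by norm_num : |(0 : ℝ)| < 1 / 2))
  obtain ⟨N, hN⟩ := eventually_atTop.1 (hlarge.and hsmall)
  refine ⟨4, by norm_num, N, fun n hn => ?_⟩
  obtain ⟨hxn, hbn⟩ := hN n hn
  have hxn0 : 0 < x n := by linarith
  rw [abs_div, abs_of_pos hxn0, div_le_iff₀ hxn0] at hbn
  exact Complex.Gamma_ofReal_add_I_mul_div_Gamma_ofReal hxn (by linarith)

/-- Asymptotic expansion of `Γ(x + ib)/Γ(x)` for real `x → ∞` and real `b = o(x)`. -/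
theorem gamma_ratio_imaginary_shift_expansion
    (x : ℕ → ℝ) (hx0 : ∀ n, 0 < x n)
    (hxInf : Tendsto x atTop atTop)
    (b : ℕ → ℝ)
    (hbx : Tendsto (fun n => b n / x n) atTop (nhds 0)) :
    ∃ C > (0 : ℝ), ∃ N : ℕ, ∀ n ≥ N, ∃ r : ℂ,
      ‖r‖ ≤ C * (|b n| + (b n) ^ 2) / (x n) ^ 2 ∧
      Complex.Gamma ((x n : ℂ) + Complex.I * (b n : ℂ)) / Complex.Gamma ((x n : ℂ)) =
        Complex.exp (((x n : ℂ) + Complex.I * (b n : ℂ)) *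
            Complex.log ((x n : ℂ) + Complex.I * (b n : ℂ)) -
          (x n : ℂ) * (Real.log (x n) : ℂ) - Complex.I * (b n : ℂ) -
          Complex.I * (b n : ℂ) / (2 * (x n : ℂ)) + r) :=
  gamma_ratio_imaginary_shift_expansion_general x hxInf b hbx
end
end

section
/- For every K > 0 there exist a constant C > 0 and F₀ such that for all integers f ≥ F₀, all real x with 0 < x ≤ K f, and all integers w₁, w₂ ≥ 0 with w₁ + w₂ ≥ 1: | Δ₄^{w₂} Δ₂^{w₁} (A₁, f) | ≤ (w₁ + w₂)! · C^{w₁+w₂} · ∏_{k=1}^{w₁+w₂} (f + 2k)^{−1}, where A₁(g) = x/(g+2) − 1 and Δ₄^{w₂} Δ₂^{w₁}(A₁, f) = ∑_{u₁=0}^{w₁} ∑_{u₂=0}^{w₂} C(w₁,u₁) C(w₂,u₂) (−1)^{w₁−u₁+w₂−u₂} A₁(f + 2u₁ + 4u₂). -/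
noncomputable section

namespace MixedDiffA1Aux

open Finset

/-- The product `(y+2)(y+4)⋯(y+2(n+1))`. -/
def Rp (y : ℝ) (n : ℕ) : ℝ := ∏ i ∈ Finset.range (n+1), (y + 2*i + 2)

lemma Rp_pos {y : ℝ} (hy : 0 ≤ y) (n : ℕ) : 0 < Rp y n := by
  apply Finset.prod_pos; intro i _; positivity

lemma Rp_succ (y : ℝ) (n : ℕ) : Rp y (n+1) = Rp y n * (y + 2*(n+1) + 2) := by
  rw [Rp, Finset.prod_range_succ]; push_cast [Rp]; ring_nf

lemma Rp_shift (y : ℝ) (n : ℕ) : Rp y (n+1) = Rp (y+2) n * (y+2) := by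
  rw [Rp, Finset.prod_range_succ']
  congr 1
  · apply Finset.prod_congr rfl; intro i _; push_cast; ring
  · norm_num

lemma inv_Rp_diff {y : ℝ} (hy : 0 ≤ y) (v : ℕ) :
    (Rp (y+2) v)⁻¹ - (Rp y v)⁻¹ = -(2*(v+1)) / Rp y (v+1) := by
  have h1 : Rp (y+2) v ≠ 0 := (Rp_pos (by linarith) v).ne'
  have h2 : Rp y v ≠ 0 := (Rp_pos hy v).ne'
  have e1 := Rp_shift y v
  have e2 := Rp_succ y v
  have h3 : y + 2 ≠ 0 := by linarith
  have h4 : y + 2*((v:ℝ)+1) + 2 ≠ 0 := by positivity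
  have h5 : Rp y (v+1) ≠ 0 := (Rp_pos hy (v+1)).ne'
  field_simp
  linear_combination (Rp y v) * e1 - (Rp (y+2) v) * e2

lemma diffG (v : ℕ) : ∀ y : ℝ, 0 ≤ y →
    (fwdDiff (2:ℝ))^[v] (fun g => (g+2)⁻¹) y
      = (-1)^v * v.factorial * 2^v / Rp y v := by
  induction v with
  | zero => intro y hy; simp [Rp]
  | succ v ih =>
      intro y hy
      rw [Function.iterate_succ_apply', fwdDiff, ih (y+2) (by linarith), ih y hy]
      have key := inv_Rp_diff hy v
      have h1 : Rp (y+2) v ≠ 0 := (Rp_pos (by linarith) v).ne'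
      have h2 : Rp y v ≠ 0 := (Rp_pos hy v).ne'
      have h3 : Rp y (v+1) ≠ 0 := (Rp_pos hy (v+1)).ne'
      have : ((-1:ℝ))^v * v.factorial * 2^v / Rp (y+2) v
           - (-1)^v * v.factorial * 2^v / Rp y v
           = (-1)^v * v.factorial * 2^v * ((Rp (y+2) v)⁻¹ - (Rp y v)⁻¹) := by
        field_simp
      rw [this, key, ← mul_div_assoc]
      congr 1
      rw [pow_succ, pow_succ, Nat.factorial_succ]
      push_cast
      ring

lemma pascal_sum (n : ℕ) (a : ℕ → ℝ) :
    ∑ j ∈ range (n+1), (n.choose j : ℝ) * (a (j+1) + a j)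
      = ∑ j ∈ range (n+2), ((n+1).choose j : ℝ) * a j := by
  rw [Finset.sum_range_succ' (fun j => ((n+1).choose j : ℝ) * a j) (n+1)]
  simp only [Nat.choose_succ_succ, Nat.cast_add, add_mul, Nat.choose_zero_right, Nat.cast_one,
    one_mul, Finset.sum_add_distrib]
  have h1 : ∑ j ∈ range (n+1), ((n.choose (j+1) : ℝ)) * a (j+1)
      = ∑ j ∈ range n, ((n.choose (j+1) : ℝ)) * a (j+1) := by
    rw [Finset.sum_range_succ, Nat.choose_succ_self]; simp
  have h2 : ∑ j ∈ range (n+1), ((n.choose j : ℝ)) * a j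
      = (∑ j ∈ range n, ((n.choose (j+1) : ℝ)) * a (j+1)) + a 0 := by
    rw [Finset.sum_range_succ' (fun j => ((n.choose j : ℝ)) * a j) n]
    simp
  simp only [mul_add, Finset.sum_add_distrib]
  rw [h1, h2]
  ring

lemma diffFull (w₁ : ℕ) : ∀ (w₂ : ℕ) (y : ℝ), 0 ≤ y →
    (fwdDiff (4:ℝ))^[w₂] ((fwdDiff (2:ℝ))^[w₁] (fun g => (g+2)⁻¹)) y
      = (-1)^(w₁+w₂) * (w₁+w₂).factorial * 2^(w₁+w₂) *
        ∑ j ∈ Finset.range (w₂+1), (w₂.choose j : ℝ) * (Rp (y + 2*j) (w₁+w₂))⁻¹ := by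
  intro w₂
  induction w₂ with
  | zero =>
      intro y hy
      simp only [Function.iterate_zero, id_eq, Nat.add_zero, Finset.range_one,
        Finset.sum_singleton, Nat.choose_self, Nat.cast_one]
      rw [diffG w₁ y hy]
      push_cast
      rw [div_eq_mul_inv]
      norm_num
  | succ m ih =>
      intro y hy
      rw [Function.iterate_succ_apply', fwdDiff, ih (y+4) (by linarith), ih y hy]
      set w := w₁ + m with hw
      have hwm : w₁ + (m+1) = w + 1 := by omega
      rw [hwm]
      have hterm : ∀ j : ℕ, (Rp (y + 4 + 2*j) w)⁻¹ - (Rp (y + 2*j) w)⁻¹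
          = -(2*((w:ℝ)+1)) * ((Rp (y + 2*(j+1)) (w+1))⁻¹ + (Rp (y + 2*j) (w+1))⁻¹) := by
        intro j
        have hz : (0:ℝ) ≤ y + 2*j := by positivity
        have hz2 : (0:ℝ) ≤ (y + 2*j) + 2 := by linarith
        have d1 := inv_Rp_diff hz2 w
        have d2 := inv_Rp_diff hz w
        have e1 : y + 4 + 2*(j:ℝ) = ((y + 2*j) + 2) + 2 := by ring
        have e2 : y + 2*((j:ℝ)+1) = (y + 2*j) + 2 := by ring
        rw [e1, e2]
        have : (Rp ((y+2*(j:ℝ))+2+2) w)⁻¹ - (Rp (y+2*(j:ℝ)) w)⁻¹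
            = ((Rp ((y+2*(j:ℝ))+2+2) w)⁻¹ - (Rp ((y+2*(j:ℝ))+2) w)⁻¹)
              + ((Rp ((y+2*(j:ℝ))+2) w)⁻¹ - (Rp (y+2*(j:ℝ)) w)⁻¹) := by ring
        rw [this, d1, d2, div_eq_mul_inv, div_eq_mul_inv]
        ring
      have hsum : (∑ j ∈ range (m+1), (m.choose j : ℝ) * (Rp (y + 4 + 2*j) w)⁻¹)
          - (∑ j ∈ range (m+1), (m.choose j : ℝ) * (Rp (y + 2*j) w)⁻¹)
          = -(2*((w:ℝ)+1)) * ∑ j ∈ range (m+2), ((m+1).choose j : ℝ) * (Rp (y + 2*j) (w+1))⁻¹ := by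
        rw [← Finset.sum_sub_distrib]
        have : ∀ j ∈ range (m+1), (m.choose j : ℝ) * (Rp (y + 4 + 2*j) w)⁻¹
            - (m.choose j : ℝ) * (Rp (y + 2*j) w)⁻¹
            = -(2*((w:ℝ)+1)) * ((m.choose j : ℝ) *
              ((Rp (y + 2*((j:ℕ)+1:ℕ)) (w+1))⁻¹ + (Rp (y + 2*(j:ℕ)) (w+1))⁻¹)) := by
          intro j _
          rw [← mul_sub, hterm j]
          push_cast
          ring
        rw [Finset.sum_congr rfl this, ← Finset.mul_sum]
        congr 1
        exact pascal_sum m (fun j => (Rp (y + 2*(j:ℕ)) (w+1))⁻¹)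
      rw [← mul_sub, hsum]
      rw [pow_succ, pow_succ, Nat.factorial_succ]
      push_cast
      ring

lemma double_sum_eq (x : ℝ) (w₁ w₂ : ℕ) (f : ℝ) :
    ∑ u₁ ∈ Finset.range (w₁ + 1), ∑ u₂ ∈ Finset.range (w₂ + 1),
        (w₁.choose u₁ : ℝ) * (w₂.choose u₂ : ℝ) *
          (-1 : ℝ) ^ (w₁ - u₁ + (w₂ - u₂)) *
          (x / (f + 2 * (u₁ : ℝ) + 4 * (u₂ : ℝ) + 2) - 1)
    = (fwdDiff (4:ℝ))^[w₂] ((fwdDiff (2:ℝ))^[w₁] (fun g => x/(g+2) - 1)) f := by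
  rw [fwdDiff_iter_eq_sum_shift, Finset.sum_comm]
  apply Finset.sum_congr rfl
  intro u₂ hu₂
  rw [fwdDiff_iter_eq_sum_shift, Finset.smul_sum]
  apply Finset.sum_congr rfl
  intro u₁ hu₁
  have harg : f + (u₂:ℕ) • (4:ℝ) + (u₁:ℕ) • (2:ℝ) = f + 2*(u₁:ℝ) + 4*(u₂:ℝ) + 2 - 2 := by
    simp [nsmul_eq_mul]; ring
  rw [harg]
  have : x / (f + 2*(u₁:ℝ) + 4*(u₂:ℝ) + 2) - 1
      = (fun g : ℝ => x/(g+2) - 1) (f + 2*(u₁:ℝ) + 4*(u₂:ℝ) + 2 - 2) := by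
    norm_num
  rw [this]
  rw [smul_smul, zsmul_eq_mul]
  rw [pow_add]
  push_cast
  ring

lemma iter_zero (h : ℝ) (n : ℕ) : (fwdDiff h)^[n] (fun _ => (0:ℝ)) = fun _ => 0 :=
  Function.iterate_fixed (fwdDiff_const h 0) n

lemma iter_const (h : ℝ) (c : ℝ) (n : ℕ) (hn : 1 ≤ n) :
    (fwdDiff h)^[n] (fun _ => c) = fun _ => 0 := by
  obtain ⟨m, rfl⟩ : ∃ m, n = m + 1 := ⟨n - 1, by omega⟩
  rw [Function.iterate_succ_apply, fwdDiff_const]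
  exact iter_zero h m

lemma Rp_eq (y : ℝ) (n : ℕ) :
    Rp y n = (∏ k ∈ Finset.Icc 1 n, (y + 2*(k:ℝ))) * (y + 2*((n:ℝ)+1)) := by
  induction n with
  | zero => simp [Rp]
  | succ n ih =>
      rw [Rp_succ, ih, Finset.prod_Icc_succ_top (by omega : 1 ≤ n+1)]
      push_cast
      ring

lemma value (x : ℝ) (w₁ w₂ : ℕ) (hw : 1 ≤ w₁ + w₂) (y : ℝ) (hy : 0 ≤ y) :
    (fwdDiff (4:ℝ))^[w₂] ((fwdDiff (2:ℝ))^[w₁] (fun g => x/(g+2) - 1)) y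
      = x * ((-1)^(w₁+w₂) * (w₁+w₂).factorial * 2^(w₁+w₂) *
        ∑ j ∈ Finset.range (w₂+1), (w₂.choose j : ℝ) * (Rp (y + 2*j) (w₁+w₂))⁻¹) := by
  have hsplit : (fun g : ℝ => x/(g+2) - 1)
      = (x • fun g : ℝ => (g+2)⁻¹) + (fun _ : ℝ => (-1:ℝ)) := by
    funext g
    simp [div_eq_mul_inv]
    ring
  rw [hsplit, fwdDiff_iter_add, fwdDiff_iter_add, Pi.add_apply,
    fwdDiff_iter_const_smul, fwdDiff_iter_const_smul, Pi.smul_apply, smul_eq_mul,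
    diffFull w₁ w₂ y hy]
  have hconst : (fwdDiff (4:ℝ))^[w₂] ((fwdDiff (2:ℝ))^[w₁] (fun _ : ℝ => (-1:ℝ))) y = 0 := by
    rcases Nat.eq_zero_or_pos w₁ with h | h
    · subst h
      have hw₂ : 1 ≤ w₂ := by omega
      simp only [Function.iterate_zero, id_eq]
      rw [iter_const 4 (-1) w₂ hw₂]
    · rw [iter_const 2 (-1) w₁ h, iter_zero 4 w₂]
  rw [hconst, add_zero]

end MixedDiffA1Aux

open MixedDiffA1Aux Finset

/-- Uniform bound on mixed forward differences (steps 2 and 4) of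
`A₁(g) = x/(g+2) − 1`. -/
theorem mixed_diff_A1_bound (K : ℝ) (hK : 0 < K) :
    ∃ C > (0 : ℝ), ∃ F₀ : ℕ, ∀ f : ℕ, F₀ ≤ f → ∀ x : ℝ, 0 < x → x ≤ K * (f : ℝ) →
      ∀ w₁ w₂ : ℕ, 1 ≤ w₁ + w₂ →
        |∑ u₁ ∈ Finset.range (w₁ + 1), ∑ u₂ ∈ Finset.range (w₂ + 1),
            (w₁.choose u₁ : ℝ) * (w₂.choose u₂ : ℝ) *
              (-1 : ℝ) ^ (w₁ - u₁ + (w₂ - u₂)) *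
              (x / ((f : ℝ) + 2 * (u₁ : ℝ) + 4 * (u₂ : ℝ) + 2) - 1)| ≤
          ((w₁ + w₂).factorial : ℝ) * C ^ (w₁ + w₂) *
            ∏ k ∈ Finset.Icc 1 (w₁ + w₂), ((f : ℝ) + 2 * (k : ℝ))⁻¹ := by
  refine ⟨4*(K+1), by linarith, 0, ?_⟩
  intro f _ x hx hxK w₁ w₂ hw
  have hy : (0:ℝ) ≤ (f:ℝ) := Nat.cast_nonneg f
  set w := w₁ + w₂ with hwdef
  rw [double_sum_eq, value x w₁ w₂ hw (f:ℝ) hy]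
  set S := ∑ j ∈ Finset.range (w₂+1), (w₂.choose j : ℝ) * (Rp ((f:ℝ) + 2*j) w)⁻¹ with hS
  have hSnn : 0 ≤ S := by
    apply Finset.sum_nonneg
    intro j _
    have := Rp_pos (by positivity : (0:ℝ) ≤ (f:ℝ) + 2*j) w
    positivity
  have habs : |x * ((-1)^w * (w.factorial : ℝ) * 2^w * S)|
      = x * ((w.factorial : ℝ) * 2^w * S) := by
    rw [abs_mul, abs_of_pos hx, abs_mul, abs_mul, abs_mul, abs_pow, abs_neg, abs_one,
      one_pow, one_mul, abs_of_nonneg (by positivity : (0:ℝ) ≤ (w.factorial : ℝ)),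
      abs_of_nonneg (by positivity : (0:ℝ) ≤ (2:ℝ)^w), abs_of_nonneg hSnn]
  rw [habs]
  have hRmono : ∀ j : ℕ, Rp (f:ℝ) w ≤ Rp ((f:ℝ) + 2*j) w := by
    intro j
    apply Finset.prod_le_prod
    · intro i _; positivity
    · intro i _; have : (0:ℝ) ≤ 2*(j:ℝ) := by positivity
      linarith
  have hRpos := Rp_pos hy w
  have hSle : S ≤ 2^w₂ * (Rp (f:ℝ) w)⁻¹ := by
    have : S ≤ ∑ j ∈ Finset.range (w₂+1), (w₂.choose j : ℝ) * (Rp (f:ℝ) w)⁻¹ := by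
      apply Finset.sum_le_sum
      intro j _
      have h1 := Rp_pos (by positivity : (0:ℝ) ≤ (f:ℝ) + 2*(j:ℝ)) w
      gcongr
      exact hRmono j
    refine this.trans_eq ?_
    rw [← Finset.sum_mul]
    congr 1
    rw [← Nat.cast_sum, Nat.sum_range_choose]
    push_cast; ring
  set Q := ∏ k ∈ Finset.Icc 1 w, ((f:ℝ) + 2*(k:ℝ)) with hQ
  have hQpos : 0 < Q := by
    apply Finset.prod_pos
    intro k hk
    have : (1:ℕ) ≤ k := (Finset.mem_Icc.mp hk).1
    have : (1:ℝ) ≤ (k:ℝ) := by exact_mod_cast this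
    nlinarith
  have hRQ : Rp (f:ℝ) w = Q * ((f:ℝ) + 2*((w:ℝ)+1)) := Rp_eq (f:ℝ) w
  have hden : (0:ℝ) < (f:ℝ) + 2*((w:ℝ)+1) := by positivity
  have hProdInv : ∏ k ∈ Finset.Icc 1 w, ((f:ℝ) + 2*(k:ℝ))⁻¹ = Q⁻¹ := by
    rw [hQ, ← Finset.prod_inv_distrib]
  rw [hProdInv]
  have hxden : x * ((f:ℝ) + 2*((w:ℝ)+1))⁻¹ ≤ K := by
    rw [← div_eq_mul_inv, div_le_iff₀ hden]
    have : K * (f:ℝ) ≤ K * ((f:ℝ) + 2*((w:ℝ)+1)) := by nlinarith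
    linarith
  have h44 : (2:ℝ)^w * 2^w₂ * K ≤ (4*(K+1))^w := by
    have e : ((4:ℝ)*(K+1))^w = 2^w * 2^w * (K+1)^w := by
      rw [show (4*(K+1):ℝ) = 2*2*(K+1) by ring, mul_pow, mul_pow]
    have h2 : (2:ℝ)^w₂ ≤ 2^w := by
      apply pow_le_pow_right₀ one_le_two (by omega)
    have h3 : K ≤ (K+1)^w := by
      have : (K+1:ℝ) ≤ (K+1)^w := le_self_pow₀ (by linarith) (by omega)
      linarith
    rw [e]
    have hKnn : (0:ℝ) ≤ K := le_of_lt hK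
    gcongr
  calc x * ((w.factorial:ℝ) * 2^w * S)
      ≤ x * ((w.factorial:ℝ) * 2^w * (2^w₂ * (Rp (f:ℝ) w)⁻¹)) := by gcongr
    _ = (w.factorial:ℝ) * (2^w * 2^w₂) * (x * ((f:ℝ) + 2*((w:ℝ)+1))⁻¹) * Q⁻¹ := by
        rw [hRQ, mul_inv]; ring
    _ ≤ (w.factorial:ℝ) * (2^w * 2^w₂) * K * Q⁻¹ := by
        have hQinv : (0:ℝ) ≤ Q⁻¹ := by positivity
        gcongr
    _ = (w.factorial:ℝ) * ((2:ℝ)^w * 2^w₂ * K) * Q⁻¹ := by ring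
    _ ≤ (w.factorial:ℝ) * (4*(K+1))^w * Q⁻¹ := by
        have hQinv : (0:ℝ) ≤ Q⁻¹ := by positivity
        gcongr

end
end

section
/- For every K > 0 there exist a constant C > 0 and F₀ such that for all integers f ≥ F₀, all real x with 0 < x ≤ K f, and all integers w₁, w₂ ≥ 0 with w₁ + w₂ ≥ 1: | Δ₄^{w₂} Δ₂^{w₁} (A₂, f) | ≤ (w₁ + w₂ + 1)! · C^{w₁+w₂+1} · ∏_{k=1}^{w₁+w₂} (f + 2k)^{−1}, where A₂(g) = x²/((g+4)(g+6)) − 1 and Δ₄^{w₂} Δ₂^{w₁}(A₂, f) = ∑_{u₁=0}^{w₁} ∑_{u₂=0}^{w₂} C(w₁,u₁) C(w₂,u₂) (−1)^{w₁−u₁+w₂−u₂} A₂(f + 2u₁ + 4u₂). -/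
open Finset Function fwdDiff

noncomputable section

private def PP (n : ℕ) (y : ℝ) : ℝ := ∏ j ∈ Finset.range n, (y + 4 + 2 * (j : ℝ))

private lemma PP_pos {y : ℝ} (hy : 0 ≤ y) (n : ℕ) : 0 < PP n y :=
  Finset.prod_pos fun j _ => by positivity

private lemma PP_succ (n : ℕ) (y : ℝ) : PP (n+1) y = PP n y * (y + 4 + 2*(n:ℝ)) :=
  Finset.prod_range_succ _ _

private lemma PP_succ' (n : ℕ) (y : ℝ) : PP (n+1) y = PP n (y+2) * (y+4) := by
  unfold PP
  rw [Finset.prod_range_succ']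
  congr 1
  · exact Finset.prod_congr rfl fun j _ => by push_cast; ring
  · norm_num

private lemma PP_mono {y z : ℝ} (hy : 0 ≤ y) (hyz : y ≤ z) (n : ℕ) : PP n y ≤ PP n z :=
  Finset.prod_le_prod (fun j _ => by positivity) (fun j _ => by linarith)

private lemma step2_iter (w : ℕ) : ∀ y : ℝ, 0 ≤ y →
    (fwdDiff (2:ℝ))^[w] (fun g : ℝ => ((g+4)*(g+6))⁻¹) y
      = (-2)^w * ((w+1).factorial : ℝ) / PP (w+2) y := by
  induction w with
  | zero =>
    intro y hy
    have h2 : PP 2 y = (y+4)*(y+6) := by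
      unfold PP
      rw [Finset.prod_range_succ, Finset.prod_range_succ, Finset.prod_range_zero]
      push_cast; ring
    simp only [iterate_zero, id_eq, pow_zero, one_mul, h2]
    norm_num [Nat.factorial]
  | succ w IH =>
    intro y hy
    rw [Function.iterate_succ_apply', fwdDiff, IH (y+2) (by linarith), IH y hy]
    have h1 : PP (w+3) y = PP (w+2) (y+2) * (y+4) := PP_succ' (w+2) y
    have h2 : PP (w+3) y = PP (w+2) y * (y + 4 + 2*((w:ℝ)+2)) := by
      rw [PP_succ (w+2) y]; push_cast; ring
    have hA : (0:ℝ) < PP (w+2) (y+2) := PP_pos (by linarith) _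
    have hB : (0:ℝ) < PP (w+2) y := PP_pos hy _
    have hfac : (((w+1)+1).factorial : ℝ) = ((w:ℝ)+2) * ((w+1).factorial : ℝ) := by
      rw [Nat.factorial_succ]; push_cast; ring
    set c : ℝ := (-2)^w * ((w+1).factorial : ℝ) with hc
    set A := PP (w+2) (y+2) with hAdef
    set B := PP (w+2) y with hBdef
    set t : ℝ := y + 4 + 2*((w:ℝ)+2) with ht
    have hrel : A * (y+4) = B * t := by rw [← h1, h2]
    have hy4 : (y:ℝ) + 4 ≠ 0 := by linarith
    have htne : t ≠ 0 := by rw [ht]; positivity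
    show c / A - c / B = (-2)^(w+1) * (((w+1)+1).factorial : ℝ) / PP ((w+1)+2) y
    have h3 : PP ((w+1)+2) y = A * (y+4) := h1
    rw [h3, hfac]
    have e1 : c / A = c*(y+4) / (A*(y+4)) := by
      rw [mul_div_mul_right _ _ hy4]
    have e2 : c / B = c*t / (A*(y+4)) := by
      rw [hrel, mul_div_mul_right _ _ htne]
    have hnum : c*(y+4) - c*t = (-2)^(w+1) * (((w:ℝ)+2) * ((w+1).factorial : ℝ)) := by
      rw [hc, ht, pow_succ]; ring
    rw [e1, e2, div_sub_div_same, hnum, mul_div_assoc]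

private lemma mix (F : ℝ → ℝ) (w₁ w₂ : ℕ) : ∀ f : ℝ,
    (fwdDiff (4:ℝ))^[w₂] ((fwdDiff (2:ℝ))^[w₁] F) f
      = ∑ m ∈ Finset.range (w₂+1),
          (w₂.choose m : ℝ) * (fwdDiff (2:ℝ))^[w₁+w₂] F (f + 2*(m:ℝ)) := by
  induction w₂ with
  | zero => intro f; simp
  | succ n IH =>
    intro f
    simp only [show w₁ + (n + 1) = w₁ + n + 1 by omega]
    rw [Function.iterate_succ_apply', fwdDiff, IH (f+4), IH f]
    set T := (fwdDiff (2:ℝ))^[w₁+n] F with hT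
    set U := (fwdDiff (2:ℝ))^[w₁+n+1] F with hU
    have hUT : ∀ z : ℝ, U z = T (z+2) - T z := by
      intro z
      rw [hU, Function.iterate_succ_apply', fwdDiff, hT]
    have hsplit : ∀ z : ℝ, T (z+4) - T z = U (z+2) + U z := by
      intro z
      rw [hUT, hUT]
      ring_nf
    have key : ∑ m ∈ Finset.range (n+1), (n.choose m : ℝ) * T (f+4 + 2*(m:ℝ))
        - ∑ m ∈ Finset.range (n+1), (n.choose m : ℝ) * T (f + 2*(m:ℝ))
        = ∑ m ∈ Finset.range (n+1), (n.choose m : ℝ) * U (f + 2*((m:ℝ)+1))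
          + ∑ m ∈ Finset.range (n+1), (n.choose m : ℝ) * U (f + 2*(m:ℝ)) := by
      rw [← Finset.sum_sub_distrib, ← Finset.sum_add_distrib]
      refine Finset.sum_congr rfl fun m _ => ?_
      have h4 : f + 4 + 2*(m:ℝ) = (f + 2*(m:ℝ)) + 4 := by ring
      have h2 : f + 2*((m:ℝ)+1) = (f + 2*(m:ℝ)) + 2 := by ring
      rw [h4, h2, ← mul_sub, ← mul_add, hsplit]
    rw [key]
    have base : ∑ m ∈ Finset.range (n+2), (n.choose m : ℝ) * U (f + 2*(m:ℝ))
        = ∑ m ∈ Finset.range (n+1), (n.choose m : ℝ) * U (f + 2*(m:ℝ)) := by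
      rw [Finset.sum_range_succ, Nat.choose_succ_self]
      simp
    have shift : ∑ m ∈ Finset.range (n+2), (n.choose m : ℝ) * U (f + 2*(m:ℝ))
        = (∑ m ∈ Finset.range (n+1), (n.choose (m+1) : ℝ) * U (f + 2*((m:ℝ)+1))) + U f := by
      rw [Finset.sum_range_succ']
      simp only [Nat.cast_zero, mul_zero, add_zero, Nat.choose_zero_right, Nat.cast_one, one_mul]
      congr 1
      refine Finset.sum_congr rfl fun m _ => ?_
      push_cast
      ring_nf
    have hRHS : ∑ m ∈ Finset.range (n+1+1), ((n+1).choose m : ℝ) * U (f + 2*(m:ℝ))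
        = ∑ m ∈ Finset.range (n+1), (n.choose m : ℝ) * U (f + 2*((m:ℝ)+1))
          + ∑ m ∈ Finset.range (n+1), (n.choose m : ℝ) * U (f + 2*(m:ℝ)) := by
      rw [Finset.sum_range_succ']
      simp only [Nat.cast_zero, mul_zero, add_zero, Nat.choose_zero_right, Nat.cast_one, one_mul]
      have expand : ∑ m ∈ Finset.range (n+1), (((n+1).choose (m+1) : ℕ) : ℝ) * U (f + 2*(((m+1:ℕ)):ℝ))
          = ∑ m ∈ Finset.range (n+1), (n.choose m : ℝ) * U (f + 2*((m:ℝ)+1))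
            + ∑ m ∈ Finset.range (n+1), (n.choose (m+1) : ℝ) * U (f + 2*((m:ℝ)+1)) := by
        rw [← Finset.sum_add_distrib]
        refine Finset.sum_congr rfl fun m _ => ?_
        rw [Nat.choose_succ_succ]
        push_cast
        ring
      rw [expand]
      linarith [shift, base]
    rw [hRHS]

private lemma iter_zero_fn (h : ℝ) (n : ℕ) :
    (fwdDiff h)^[n] (fun _ : ℝ => (0:ℝ)) = fun _ => 0 := by
  induction n with
  | zero => simp
  | succ n IH => rw [Function.iterate_succ_apply, fwdDiff_const]; exact IH

private lemma iter_const (h : ℝ) (c : ℝ) (n : ℕ) :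
    (fwdDiff h)^[n+1] (fun _ : ℝ => c) = fun _ => 0 := by
  rw [Function.iterate_succ_apply, fwdDiff_const]
  exact iter_zero_fn h n

private lemma repr_lemma (F : ℝ → ℝ) (w₁ w₂ : ℕ) (y : ℝ) :
    ∑ u₁ ∈ Finset.range (w₁ + 1), ∑ u₂ ∈ Finset.range (w₂ + 1),
        (w₁.choose u₁ : ℝ) * (w₂.choose u₂ : ℝ) * (-1 : ℝ) ^ (w₁ - u₁ + (w₂ - u₂)) *
          F (y + 2 * (u₁ : ℝ) + 4 * (u₂ : ℝ))
      = (fwdDiff (4:ℝ))^[w₂] ((fwdDiff (2:ℝ))^[w₁] F) y := by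
  rw [Finset.sum_comm, fwdDiff_iter_eq_sum_shift]
  refine Finset.sum_congr rfl fun u₂ hu₂ => ?_
  rw [fwdDiff_iter_eq_sum_shift, Finset.smul_sum]
  refine Finset.sum_congr rfl fun u₁ hu₁ => ?_
  have harg : (y + u₂ • (4:ℝ)) + u₁ • (2:ℝ) = y + 2 * (u₁:ℝ) + 4 * (u₂:ℝ) := by
    push_cast [nsmul_eq_mul]
    ring
  rw [harg]
  push_cast [zsmul_eq_mul]
  rw [pow_add]
  ring

set_option maxHeartbeats 1000000 in
/-- Uniform bound on mixed forward differences (steps 2 and 4) of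
`A₂(g) = x²/((g+4)(g+6)) − 1`. -/
theorem mixed_diff_A2_bound (K : ℝ) (hK : 0 < K) :
    ∃ C > (0 : ℝ), ∃ F₀ : ℕ, ∀ f : ℕ, F₀ ≤ f → ∀ x : ℝ, 0 < x → x ≤ K * (f : ℝ) →
      ∀ w₁ w₂ : ℕ, 1 ≤ w₁ + w₂ →
        |∑ u₁ ∈ Finset.range (w₁ + 1), ∑ u₂ ∈ Finset.range (w₂ + 1),
            (w₁.choose u₁ : ℝ) * (w₂.choose u₂ : ℝ) *
              (-1 : ℝ) ^ (w₁ - u₁ + (w₂ - u₂)) *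
              (x ^ 2 / (((f : ℝ) + 2 * (u₁ : ℝ) + 4 * (u₂ : ℝ) + 4) *
                  ((f : ℝ) + 2 * (u₁ : ℝ) + 4 * (u₂ : ℝ) + 6)) - 1)| ≤
          ((w₁ + w₂ + 1).factorial : ℝ) * C ^ (w₁ + w₂ + 1) *
            ∏ k ∈ Finset.Icc 1 (w₁ + w₂), ((f : ℝ) + 2 * (k : ℝ))⁻¹ := by
  refine ⟨4*(K^2+1), by positivity, 1, ?_⟩
  intro f hf x hx hxK w₁ w₂ hw
  have hy1 : (1:ℝ) ≤ (f:ℝ) := by exact_mod_cast hf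
  set y : ℝ := (f:ℝ) with hydef
  clear_value y
  set n := w₁ + w₂ with hn
  clear_value n
  -- Step 1: rewrite sum as iterated forward difference
  have hrepr := repr_lemma (fun g : ℝ => x^2/((g+4)*(g+6)) - 1) w₁ w₂ y
  rw [hrepr]
  -- Step 2: split off the constant
  have hFdecomp : (fun g : ℝ => x^2/((g+4)*(g+6)) - 1)
      = ((x^2) • (fun g : ℝ => ((g+4)*(g+6))⁻¹)) + (fun _ => (-1:ℝ)) := by
    funext g
    simp only [Pi.add_apply, Pi.smul_apply, smul_eq_mul]
    rw [div_eq_mul_inv]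
    ring
  have hconstzero : (fwdDiff (4:ℝ))^[w₂] ((fwdDiff (2:ℝ))^[w₁] (fun _ : ℝ => (-1:ℝ))) y = 0 := by
    rcases w₁ with _ | k
    · obtain ⟨m, rfl⟩ : ∃ m, w₂ = m + 1 := ⟨w₂ - 1, by omega⟩
      simp only [Function.iterate_zero, id_eq]
      rw [iter_const]
    · rw [iter_const, iter_zero_fn]
  have hiter : (fwdDiff (4:ℝ))^[w₂] ((fwdDiff (2:ℝ))^[w₁]
        (fun g : ℝ => x^2/((g+4)*(g+6)) - 1)) y
      = x^2 * (fwdDiff (4:ℝ))^[w₂] ((fwdDiff (2:ℝ))^[w₁]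
        (fun g : ℝ => ((g+4)*(g+6))⁻¹)) y := by
    rw [hFdecomp, fwdDiff_iter_add, fwdDiff_iter_add, Pi.add_apply, hconstzero, add_zero,
      fwdDiff_iter_const_smul, fwdDiff_iter_const_smul, Pi.smul_apply, smul_eq_mul]
  rw [hiter]
  -- Step 3: closed form
  have hval : (fwdDiff (4:ℝ))^[w₂] ((fwdDiff (2:ℝ))^[w₁]
        (fun g : ℝ => ((g+4)*(g+6))⁻¹)) y
      = ∑ m ∈ Finset.range (w₂+1), (w₂.choose m : ℝ) *
          ((-2)^n * ((n+1).factorial : ℝ) / PP (n+2) (y + 2*(m:ℝ))) := by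
    rw [hn, mix]
    refine Finset.sum_congr rfl fun m _ => ?_
    have hm : (0:ℝ) ≤ (m:ℝ) := Nat.cast_nonneg m
    rw [step2_iter (w₁+w₂) (y + 2*(m:ℝ)) (by linarith)]
  rw [hval]
  -- Step 4: estimate
  have hPy : (0:ℝ) < PP (n+2) y := PP_pos (by linarith) _
  set fac : ℝ := ((n+1).factorial : ℝ) with hfacdef
  clear_value fac
  have hfac0 : (0:ℝ) < fac := by
    rw [hfacdef]; exact_mod_cast Nat.factorial_pos _
  have habs : |x^2 * ∑ m ∈ Finset.range (w₂+1), (w₂.choose m : ℝ) *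
        ((-2)^n * fac / PP (n+2) (y + 2*(m:ℝ)))|
      ≤ x^2 * (2^w₂ * (2^n * fac / PP (n+2) y)) := by
    rw [abs_mul, abs_of_nonneg (sq_nonneg x)]
    refine mul_le_mul_of_nonneg_left ?_ (sq_nonneg x)
    calc |∑ m ∈ Finset.range (w₂+1), (w₂.choose m : ℝ) *
            ((-2)^n * fac / PP (n+2) (y + 2*(m:ℝ)))|
        ≤ ∑ m ∈ Finset.range (w₂+1), |(w₂.choose m : ℝ) *
            ((-2)^n * fac / PP (n+2) (y + 2*(m:ℝ)))| := Finset.abs_sum_le_sum_abs _ _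
      _ ≤ ∑ m ∈ Finset.range (w₂+1), (w₂.choose m : ℝ) * (2^n * fac / PP (n+2) y) := by
          refine Finset.sum_le_sum fun m _ => ?_
          have hm : (0:ℝ) ≤ (m:ℝ) := Nat.cast_nonneg m
          have hP2 : (0:ℝ) < PP (n+2) (y + 2*(m:ℝ)) := PP_pos (by linarith) _
          rw [abs_mul, abs_div, abs_mul]
          have h1 : |(w₂.choose m : ℝ)| = (w₂.choose m : ℝ) :=
            abs_of_nonneg (Nat.cast_nonneg _)
          have h2 : |(-2:ℝ)^n| = 2^n := by
            rw [abs_pow]; norm_num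
          have h3 : |fac| = fac := abs_of_nonneg hfac0.le
          have h4 : |PP (n+2) (y + 2*(m:ℝ))| = PP (n+2) (y + 2*(m:ℝ)) := abs_of_nonneg hP2.le
          rw [h1, h2, h3, h4]
          refine mul_le_mul_of_nonneg_left ?_ (Nat.cast_nonneg _)
          refine div_le_div_of_nonneg_left (by positivity) hPy ?_
          exact PP_mono (by linarith) (by linarith) _
      _ = (∑ m ∈ Finset.range (w₂+1), (w₂.choose m : ℝ)) * (2^n * fac / PP (n+2) y) := by
          rw [Finset.sum_mul]
      _ = 2^w₂ * (2^n * fac / PP (n+2) y) := by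
          congr 1
          rw [← Nat.cast_sum, Nat.sum_range_choose]
          push_cast
          ring
  refine habs.trans ?_
  -- Step 5: final comparison
  set Q : ℝ := ∏ k ∈ Finset.Icc 1 n, (y + 2*(k:ℝ)) with hQdef
  clear_value Q
  have hQpos : (0:ℝ) < Q := by
    rw [hQdef]
    refine Finset.prod_pos fun k _ => ?_
    have hk : (0:ℝ) ≤ (k:ℝ) := Nat.cast_nonneg k
    linarith
  have hQinv : ∏ k ∈ Finset.Icc 1 n, (y + 2*(k:ℝ))⁻¹ = Q⁻¹ := by
    rw [hQdef, ← Finset.prod_inv_distrib]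
  rw [hQinv]
  -- lower bound for PP (n+2) y
  have hQle : Q ≤ PP n y := by
    rw [hQdef, ← Finset.Ico_add_one_right_eq_Icc, Finset.prod_Ico_eq_prod_range]
    first
    | simp only [Nat.add_sub_cancel]
    | skip
    unfold PP
    refine Finset.prod_le_prod (fun j _ => ?_) (fun j _ => ?_)
    · have : (0:ℝ) ≤ ((1+j:ℕ):ℝ) := Nat.cast_nonneg _
      linarith
    · push_cast
      linarith [Nat.cast_nonneg (α := ℝ) j]
  have hPPlow : y * y * Q ≤ PP (n+2) y := by
    have e : PP (n+2) y = PP n y * (y + 4 + 2*(n:ℝ)) * (y + 4 + 2*((n:ℕ)+1:ℝ)) := by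
      rw [PP_succ (n+1) y, PP_succ n y]
      push_cast
      ring
    rw [e]
    have hn0 : (0:ℝ) ≤ (n:ℝ) := Nat.cast_nonneg n
    have h1 : y * y * Q ≤ (y + 4 + 2*(n:ℝ)) * (y + 4 + 2*((n:ℕ)+1:ℝ)) * Q := by
      have := mul_le_mul (by linarith : y ≤ y + 4 + 2*(n:ℝ))
        (by linarith : y ≤ y + 4 + 2*((n:ℕ)+1:ℝ)) (by linarith) (by linarith)
      exact mul_le_mul_of_nonneg_right this hQpos.le
    have h2 : (y + 4 + 2*(n:ℝ)) * (y + 4 + 2*((n:ℕ)+1:ℝ)) * Q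
        ≤ (y + 4 + 2*(n:ℝ)) * (y + 4 + 2*((n:ℕ)+1:ℝ)) * PP n y := by
      refine mul_le_mul_of_nonneg_left hQle ?_
      have : (0:ℝ) < (y + 4 + 2*(n:ℝ)) * (y + 4 + 2*((n:ℕ)+1:ℝ)) := by positivity
      linarith
    calc y * y * Q ≤ (y + 4 + 2*(n:ℝ)) * (y + 4 + 2*((n:ℕ)+1:ℝ)) * Q := h1
      _ ≤ (y + 4 + 2*(n:ℝ)) * (y + 4 + 2*((n:ℕ)+1:ℝ)) * PP n y := h2
      _ = PP n y * (y + 4 + 2*(n:ℝ)) * (y + 4 + 2*((n:ℕ)+1:ℝ)) := by ring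
  have hx2 : x^2 ≤ K^2 * (y*y) := by
    have := pow_le_pow_left₀ hx.le hxK 2
    calc x^2 ≤ (K*y)^2 := this
      _ = K^2 * (y*y) := by ring
  have hCpow : K^2 * (2^w₂ * 2^n) ≤ (4*(K^2+1))^(n+1) := by
    have h22 : (2:ℝ)^w₂ * 2^n ≤ 4^n := by
      have : (2:ℝ)^w₂ ≤ 2^n := by
        refine pow_le_pow_right₀ (by norm_num) ?_
        omega
      calc (2:ℝ)^w₂ * 2^n ≤ 2^n * 2^n := by nlinarith [pow_pos (show (0:ℝ) < 2 by norm_num) n]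
        _ = 4^n := by rw [← mul_pow]; norm_num
    have h4 : ((4:ℝ)*(K^2+1))^(n+1) = 4^(n+1) * (K^2+1)^(n+1) := mul_pow _ _ _
    have h5 : (K^2+1) ≤ (K^2+1)^(n+1) := by
      refine le_self_pow₀ (by nlinarith) (by omega)
    have h6 : (0:ℝ) < 4^n := by positivity
    rw [h4]
    have h7 : (4:ℝ)^(n+1) = 4 * 4^n := by rw [pow_succ]; ring
    rw [h7]
    have hK2 : (0:ℝ) ≤ K^2 := sq_nonneg K
    calc K^2 * (2^w₂ * 2^n) ≤ K^2 * 4^n := mul_le_mul_of_nonneg_left h22 hK2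
      _ ≤ (4*(K^2+1)) * 4^n := by
          refine mul_le_mul_of_nonneg_right (by nlinarith) h6.le
      _ = 4 * 4^n * (K^2+1) := by ring
      _ ≤ 4 * 4^n * (K^2+1)^(n+1) := by
          refine mul_le_mul_of_nonneg_left h5 (by positivity)
  -- assemble
  have hLHSeq : x^2 * (2^w₂ * (2^n * fac / PP (n+2) y))
      = (x^2 * 2^w₂ * 2^n * fac) / PP (n+2) y := by ring
  have hRHSeq : fac * (4*(K^2+1))^(n+1) * Q⁻¹ = (fac * (4*(K^2+1))^(n+1)) / Q := by
    rw [div_eq_mul_inv]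
  rw [hLHSeq, hRHSeq, div_le_div_iff₀ hPy hQpos]
  have hCpos : (0:ℝ) < (4*(K^2+1))^(n+1) := by positivity
  have key : x^2 * 2^w₂ * 2^n ≤ (4*(K^2+1))^(n+1) * (y*y) := by
    calc x^2 * 2^w₂ * 2^n ≤ (K^2 * (y*y)) * 2^w₂ * 2^n := by
          have h2 : (0:ℝ) < (2:ℝ)^w₂ * 2^n := by positivity
          nlinarith
      _ = (K^2 * (2^w₂ * 2^n)) * (y*y) := by ring
      _ ≤ (4*(K^2+1))^(n+1) * (y*y) := by nlinarith
  calc x^2 * 2^w₂ * 2^n * fac * Q ≤ ((4*(K^2+1))^(n+1) * (y*y)) * fac * Q := by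
        nlinarith [mul_pos hfac0 hQpos]
    _ = (fac * (4*(K^2+1))^(n+1)) * (y * y * Q) := by ring
    _ ≤ (fac * (4*(K^2+1))^(n+1)) * PP (n+2) y := by
        refine mul_le_mul_of_nonneg_left hPPlow ?_
        positivity
end
end

section
/- There exists a constant C > 0 such that for every real f ≥ 1 and all integers w₁, w₂ ≥ 0 with w₁ + w₂ ≥ 1: ( (w₁+w₂)! / (w₁! · w₂!) ) · f^{(w₁+w₂+1)/2} · ∏_{k=1}^{w₁+w₂} (f + 2k)^{−1} ≤ C · 2^{−(w₁+w₂−1)/2}. -/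
/-!
Write `n = w₁ + w₂ = m + 1`. The binomial coefficient is at most `2 ^ n`. In the product, the
last factor is at least `f`, and by AM-GM each of the other `m` factors is at least
`f + 2 ≥ 2 √2 √f`. Hence the left side is at most `2 ^ (m + 1) √f ^ (m + 2) / (f (2 √2 √f) ^ m)
= 2 / √2 ^ m`, which is the bound with `C = 2`.
-/

open Finset Real

lemma two_mul_sqrt_two_mul_sqrt_le_add_two {f : ℝ} (hf : 0 ≤ f) : 2 * √2 * √f ≤ f + 2 := by
  have := two_mul_le_add_sq √f √2
  rw [sq_sqrt hf, sq_sqrt zero_le_two] at this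
  linarith

lemma mul_pow_le_prod_Icc_add_two_mul {f : ℝ} (hf : 0 ≤ f) (m : ℕ) :
    f * (2 * √2 * √f) ^ m ≤ ∏ k ∈ Icc 1 (m + 1), (f + 2 * (k : ℝ)) := by
  have hbulk : (2 * √2 * √f) ^ m ≤ ∏ k ∈ Icc 1 m, (f + 2 * (k : ℝ)) := by
    calc (2 * √2 * √f) ^ m = ∏ _k ∈ Icc 1 m, 2 * √2 * √f := by simp
      _ ≤ _ := by
        refine prod_le_prod (fun _ _ => by positivity) fun k hk => ?_
        have hk1 : (1 : ℝ) ≤ k := by exact_mod_cast (mem_Icc.1 hk).1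
        linarith [two_mul_sqrt_two_mul_sqrt_le_add_two hf]
  have hlast : f ≤ f + 2 * ((m + 1 : ℕ) : ℝ) := le_add_of_nonneg_right (by positivity)
  rw [prod_Icc_succ_top (Nat.le_add_left 1 m), mul_comm f]
  exact mul_le_mul hbulk hlast hf (prod_nonneg fun _ _ => by positivity)

lemma choose_mul_sqrt_pow_div_prod_Icc_le {f : ℝ} (hf : 0 < f) (m i : ℕ) :
    (m + 1).choose i * √f ^ (m + 2) / ∏ k ∈ Icc 1 (m + 1), (f + 2 * (k : ℝ)) ≤ 2 / √2 ^ m := by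
  have hchoose : ((m + 1).choose i : ℝ) ≤ 2 ^ (m + 1) := by
    exact_mod_cast Nat.choose_le_two_pow (m + 1) i
  calc (m + 1).choose i * √f ^ (m + 2) / ∏ k ∈ Icc 1 (m + 1), (f + 2 * (k : ℝ))
      ≤ 2 ^ (m + 1) * √f ^ (m + 2) / (f * (2 * √2 * √f) ^ m) := by
        gcongr
        exact mul_pow_le_prod_Icc_add_two_mul hf.le m
    _ = 2 / √2 ^ m := by
        field_simp
        linear_combination (2 ^ (m + 1) * √2 ^ m * √f ^ m) * sq_sqrt hf.le

/-- Combinatorial bound: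
`((w₁+w₂)!/(w₁!w₂!)) f^{(w₁+w₂+1)/2} ∏_{k=1}^{w₁+w₂}(f+2k)⁻¹ ≤ C 2^{−(w₁+w₂−1)/2}`. -/
theorem factorial_power_product_bound :
    ∃ C > (0 : ℝ), ∀ f : ℝ, 1 ≤ f → ∀ w₁ w₂ : ℕ, 1 ≤ w₁ + w₂ →
      ((w₁ + w₂).factorial : ℝ) / ((w₁.factorial : ℝ) * (w₂.factorial : ℝ)) *
          f ^ (((w₁ : ℝ) + (w₂ : ℝ) + 1) / 2) *
          ∏ k ∈ Finset.Icc 1 (w₁ + w₂), (f + 2 * (k : ℝ))⁻¹ ≤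
        C * (2 : ℝ) ^ (-((w₁ : ℝ) + (w₂ : ℝ) - 1) / 2) := by
  refine ⟨2, two_pos, fun f hf w₁ w₂ hw => ?_⟩
  obtain ⟨m, hm⟩ : ∃ m, w₁ + w₂ = m + 1 := ⟨w₁ + w₂ - 1, by omega⟩
  have hn : (w₁ : ℝ) + w₂ = m + 1 := by exact_mod_cast hm
  have hf0 : 0 < f := one_pos.trans_le hf
  have hpow : f ^ (((w₁ : ℝ) + w₂ + 1) / 2) = √f ^ (m + 2) := by
    rw [rpow_div_two_eq_sqrt _ hf0.le, ← rpow_natCast, hn]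
    push_cast
    ring_nf
  have hrhs : (2 : ℝ) ^ (-((w₁ : ℝ) + w₂ - 1) / 2) = (√2 ^ m)⁻¹ := by
    rw [rpow_div_two_eq_sqrt _ zero_le_two, hn, add_sub_cancel_right, rpow_neg (sqrt_nonneg 2),
      rpow_natCast]
  rw [← Nat.cast_add_choose, prod_inv_distrib, hpow, hrhs, hm, ← div_eq_mul_inv, ← div_eq_mul_inv]
  exact choose_mul_sqrt_pow_div_prod_Icc_le hf0 m w₁
end

section
/- There exists a constant C > 0 such that for every real f ≥ 1 and all integers k₁, k₂ ≥ 0 with k₁ + k₂ ≥ 1: ( (k₁+k₂+2)! / (k₁! · k₂!) ) · f^{(k₁+k₂+1)/2} · ∏_{t=1}^{k₁+k₂} (f + 2t)^{−1} ≤ C · 2^{−(k₁+k₂−1)/2}. -/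
noncomputable section

private lemma fact_sq_bound (m : ℕ) : ((m+1)*(m+2))^2 ≤ 2500 * m.factorial := by
  induction m with
  | zero => norm_num
  | succ n ih =>
    rcases Nat.lt_or_ge n 3 with h | h
    · interval_cases n <;> norm_num [Nat.factorial]
    · have h4 : 4 ≤ n + 1 := by omega
      have key : (n+3)^2 ≤ (n+1)^3 := by
        calc (n+3)^2 ≤ (2*(n+1))^2 := Nat.pow_le_pow_left (by omega) 2
          _ = 4*(n+1)^2 := by ring
          _ ≤ (n+1)*(n+1)^2 := Nat.mul_le_mul_right _ h4
          _ = (n+1)^3 := by ring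
      have h2 : ((n+2)*(n+3))^2 ≤ (n+1) * ((n+1)*(n+2))^2 := by
        calc ((n+2)*(n+3))^2 = (n+3)^2 * (n+2)^2 := by ring
          _ ≤ (n+1)^3 * (n+2)^2 := Nat.mul_le_mul_right _ key
          _ = (n+1) * ((n+1)*(n+2))^2 := by ring
      calc ((n+1+1)*(n+1+2))^2 = ((n+2)*(n+3))^2 := by ring_nf
        _ ≤ (n+1) * ((n+1)*(n+2))^2 := h2
        _ ≤ (n+1) * (2500 * n.factorial) := Nat.mul_le_mul_left _ ih
        _ = 2500 * (n+1).factorial := by rw [Nat.factorial_succ]; ring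

private lemma choose_le_two_pow (n k : ℕ) : n.choose k ≤ 2 ^ n := by
  rcases Nat.lt_or_ge n k with h | h
  · simp [Nat.choose_eq_zero_of_lt h]
  · calc n.choose k ≤ ∑ i ∈ Finset.range (n+1), n.choose i :=
        Finset.single_le_sum (fun i _ => Nat.zero_le _)
          (Finset.mem_range.mpr (Nat.lt_succ_of_le h))
    _ = 2 ^ n := Nat.sum_range_choose n

/-- Combinatorial bound:
`((k₁+k₂+2)!/(k₁!k₂!)) f^{(k₁+k₂+1)/2} ∏_{t=1}^{k₁+k₂}(f+2t)⁻¹ ≤ C 2^{−(k₁+k₂−1)/2}`. -/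
theorem factorial_plus_two_power_product_bound :
    ∃ C > (0 : ℝ), ∀ f : ℝ, 1 ≤ f → ∀ k₁ k₂ : ℕ, 1 ≤ k₁ + k₂ →
      ((k₁ + k₂ + 2).factorial : ℝ) / ((k₁.factorial : ℝ) * (k₂.factorial : ℝ)) *
          f ^ (((k₁ : ℝ) + (k₂ : ℝ) + 1) / 2) *
          ∏ t ∈ Finset.Icc 1 (k₁ + k₂), (f + 2 * (t : ℝ))⁻¹ ≤
        C * (2 : ℝ) ^ (-((k₁ : ℝ) + (k₂ : ℝ) - 1) / 2) := by
  refine ⟨100, by norm_num, ?_⟩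
  intro f hf k₁ k₂ hk
  set m := k₁ + k₂ with hmdef
  have hf0 : (0:ℝ) < f := lt_of_lt_of_le one_pos hf
  have hsf1 : (1:ℝ) ≤ Real.sqrt f := by
    rw [show (1:ℝ) = Real.sqrt 1 by simp]
    exact Real.sqrt_le_sqrt hf
  have hsf0 : (0:ℝ) < Real.sqrt f := lt_of_lt_of_le one_pos hsf1
  have hs2 : (0:ℝ) < Real.sqrt 2 := Real.sqrt_pos.mpr (by norm_num)
  have hcast : (k₁ : ℝ) + (k₂ : ℝ) = (m : ℝ) := by push_cast [hmdef]; ring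
  -- Step A : factorial ratio bound
  have hA : ((m+2).factorial : ℝ) / ((k₁.factorial : ℝ) * (k₂.factorial : ℝ))
      ≤ ((m:ℝ)+1)*((m:ℝ)+2)*2^m := by
    have hk1 : k₁ ≤ m := Nat.le_add_right _ _
    have hch : m.choose k₁ * k₁.factorial * k₂.factorial = m.factorial := by
      have := Nat.choose_mul_factorial_mul_factorial hk1
      rwa [show m - k₁ = k₂ by omega] at this
    have hnat : (m+2).factorial ≤ ((m+1)*(m+2)*2^m) * (k₁.factorial * k₂.factorial) := by
      have h1 : (m+2).factorial = (m+1)*(m+2) * m.factorial := by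
        rw [Nat.factorial_succ, Nat.factorial_succ]; ring
      rw [h1, ← hch]
      have := Nat.mul_le_mul_right (k₁.factorial * k₂.factorial) (choose_le_two_pow m k₁)
      calc (m+1)*(m+2) * (m.choose k₁ * k₁.factorial * k₂.factorial)
          ≤ (m+1)*(m+2) * (2^m * (k₁.factorial * k₂.factorial)) := by
            apply Nat.mul_le_mul_left
            calc m.choose k₁ * k₁.factorial * k₂.factorial
                = m.choose k₁ * (k₁.factorial * k₂.factorial) := by ring
              _ ≤ 2^m * (k₁.factorial * k₂.factorial) :=
                  Nat.mul_le_mul_right _ (choose_le_two_pow m k₁)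
        _ = (m+1)*(m+2)*2^m * (k₁.factorial * k₂.factorial) := by ring
    have hpos : (0:ℝ) < (k₁.factorial : ℝ) * (k₂.factorial : ℝ) := by positivity
    rw [div_le_iff₀ hpos]
    calc ((m+2).factorial : ℝ) ≤ (((m+1)*(m+2)*2^m) * (k₁.factorial * k₂.factorial) : ℕ) := by
          exact_mod_cast hnat
      _ = ((m:ℝ)+1)*((m:ℝ)+2)*2^m * ((k₁.factorial : ℝ) * (k₂.factorial : ℝ)) := by
          push_cast; ring
  -- power rewrite
  have hFeq : f ^ (((k₁ : ℝ) + (k₂ : ℝ) + 1) / 2) = f * (Real.sqrt f)^(m-1) := by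
    rw [hcast]
    have h1 : ((m:ℝ)+1)/2 = 1 + (1/2) * ((m-1 : ℕ):ℝ) := by
      have : ((m-1:ℕ):ℝ) = (m:ℝ) - 1 := by
        push_cast [Nat.cast_sub hk]; ring
      rw [this]; ring
    rw [h1, Real.rpow_add hf0, Real.rpow_one, Real.rpow_mul hf0.le,
      Real.rpow_natCast, ← Real.sqrt_eq_rpow]
  -- product of sqrt over Ico 2 (m+1)
  have hprod_sqrt : ∏ t ∈ Finset.Ico 2 (m+1), Real.sqrt t = Real.sqrt (m.factorial) := by
    have h0 : ∏ t ∈ Finset.Ico 2 (m+1), Real.sqrt t = ∏ t ∈ Finset.Ico 1 (m+1), Real.sqrt t := by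
      rw [Finset.prod_eq_prod_Ico_succ_bot (by omega : 1 < m+1)]
      simp
    have h1 : (∏ t ∈ Finset.Ico 1 (m+1), Real.sqrt t)^2 = (m.factorial : ℝ) := by
      rw [← Finset.prod_pow]
      have : ∏ t ∈ Finset.Ico 1 (m+1), (Real.sqrt t)^2
          = ∏ t ∈ Finset.Ico 1 (m+1), (t:ℝ) :=
        Finset.prod_congr rfl (fun t _ => Real.sq_sqrt (Nat.cast_nonneg t))
      rw [this, ← Nat.cast_prod, Finset.prod_Ico_id_eq_factorial]
    rw [h0, ← h1, Real.sqrt_sq (Finset.prod_nonneg (fun t _ => Real.sqrt_nonneg _))]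
  -- product lower bound
  have hPlow : f * ((2 * Real.sqrt 2) * Real.sqrt f)^(m-1) * Real.sqrt (m.factorial)
      ≤ ∏ t ∈ Finset.Icc 1 m, (f + 2 * (t:ℝ)) := by
    rw [← Finset.Ico_add_one_right_eq_Icc, Finset.prod_eq_prod_Ico_succ_bot (by omega : 1 < m+1)]
    have hcard : (Finset.Ico 2 (m+1)).card = m - 1 := by
      rw [Nat.card_Ico]; omega
    have hterm : ∀ t ∈ Finset.Ico 2 (m+1),
        (2 * Real.sqrt 2 * Real.sqrt f) * Real.sqrt t ≤ f + 2 * (t:ℝ) := by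
      intro t _
      have h2t : (0:ℝ) ≤ 2 * t := by positivity
      have := two_mul_le_add_sq (Real.sqrt f) (Real.sqrt (2*t))
      rw [Real.sq_sqrt hf0.le, Real.sq_sqrt h2t] at this
      have hsplit : Real.sqrt (2*t) = Real.sqrt 2 * Real.sqrt t := Real.sqrt_mul (by norm_num) _
      rw [hsplit] at this
      nlinarith [this]
    calc f * ((2 * Real.sqrt 2) * Real.sqrt f)^(m-1) * Real.sqrt (m.factorial)
        = f * ∏ t ∈ Finset.Ico 2 (m+1), ((2 * Real.sqrt 2 * Real.sqrt f) * Real.sqrt t) := by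
          rw [Finset.prod_mul_distrib, Finset.prod_const, hcard, hprod_sqrt]; ring
      _ ≤ (f + 2 * ((1:ℕ):ℝ)) * ∏ t ∈ Finset.Ico 2 (m+1), (f + 2 * (t:ℝ)) := by
          apply mul_le_mul
          · push_cast; linarith
          · exact Finset.prod_le_prod (fun t _ => by positivity) hterm
          · exact Finset.prod_nonneg (fun t _ => by positivity)
          · positivity
  -- positivity of product
  have hPpos : (0:ℝ) < ∏ t ∈ Finset.Icc 1 m, (f + 2 * (t:ℝ)) :=
    Finset.prod_pos (fun t _ => by positivity)
  -- combine step B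
  set Q : ℝ := (2 * Real.sqrt 2)^(m-1) * Real.sqrt (m.factorial) with hQdef
  have hfact1 : (1:ℝ) ≤ Real.sqrt (m.factorial) := by
    rw [show (1:ℝ) = Real.sqrt 1 by simp]
    exact Real.sqrt_le_sqrt (by exact_mod_cast Nat.one_le_iff_ne_zero.mpr (Nat.factorial_ne_zero m))
  have hQpos : (0:ℝ) < Q := by positivity
  have hB : f ^ (((k₁ : ℝ) + (k₂ : ℝ) + 1) / 2)
      * (∏ t ∈ Finset.Icc 1 m, (f + 2 * (t:ℝ)))⁻¹ ≤ Q⁻¹ := by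
    have hFpos : (0:ℝ) < f * (Real.sqrt f)^(m-1) := by positivity
    have hlow' : (f * (Real.sqrt f)^(m-1)) * Q ≤ ∏ t ∈ Finset.Icc 1 m, (f + 2 * (t:ℝ)) := by
      calc (f * (Real.sqrt f)^(m-1)) * Q
          = f * ((2 * Real.sqrt 2) * Real.sqrt f)^(m-1) * Real.sqrt (m.factorial) := by
            rw [hQdef, mul_pow]; ring
        _ ≤ _ := hPlow
    rw [hFeq]
    calc f * (Real.sqrt f)^(m-1) * (∏ t ∈ Finset.Icc 1 m, (f + 2 * (t:ℝ)))⁻¹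
        ≤ f * (Real.sqrt f)^(m-1) * ((f * (Real.sqrt f)^(m-1)) * Q)⁻¹ := by
          apply mul_le_mul_of_nonneg_left _ hFpos.le
          exact inv_anti₀ (by positivity) hlow'
      _ = Q⁻¹ := by
          rw [mul_inv]
          field_simp
  -- rewrite RHS power
  have hRHS : (2:ℝ) ^ (-((k₁ : ℝ) + (k₂ : ℝ) - 1) / 2) = ((Real.sqrt 2)^(m-1))⁻¹ := by
    rw [hcast]
    have h1 : -((m:ℝ) - 1)/2 = -((1/2) * ((m-1 : ℕ):ℝ)) := by
      have : ((m-1:ℕ):ℝ) = (m:ℝ) - 1 := by push_cast [Nat.cast_sub hk]; ring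
      rw [this]; ring
    rw [h1, Real.rpow_neg (by norm_num), Real.rpow_mul (by norm_num : (0:ℝ) ≤ 2),
      Real.rpow_natCast, ← Real.sqrt_eq_rpow]
  -- final numeric bound
  have hfinal : ((m:ℝ)+1)*((m:ℝ)+2)*2^m * Q⁻¹ ≤ 100 * ((Real.sqrt 2)^(m-1))⁻¹ := by
    have hNat : (((m:ℝ)+1)*((m:ℝ)+2))^2 ≤ 2500 * (m.factorial:ℝ) := by
      exact_mod_cast fact_sq_bound m
    have hsqle : ((m:ℝ)+1)*((m:ℝ)+2) ≤ 50 * Real.sqrt (m.factorial) := by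
      have h50 : ((m:ℝ)+1)*((m:ℝ)+2) = 50 * (((m:ℝ)+1)*((m:ℝ)+2)/50) := by ring
      rw [h50]
      apply mul_le_mul_of_nonneg_left _ (by norm_num : (0:ℝ) ≤ 50)
      rw [Real.le_sqrt (by positivity) (by positivity), div_pow,
        div_le_iff₀ (by norm_num : (0:ℝ) < 50^2)]
      calc (((m:ℝ)+1)*((m:ℝ)+2))^2 ≤ 2500*(m.factorial:ℝ) := hNat
        _ = (m.factorial:ℝ) * 50^2 := by ring
    have h2m : (2:ℝ)^m = 2 * 2^(m-1) := by
      have hm : m - 1 + 1 = m := by omega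
      calc (2:ℝ)^m = 2^(m-1+1) := by rw [hm]
        _ = 2^(m-1)*2 := pow_succ 2 (m-1)
        _ = 2 * 2^(m-1) := by ring
    have hne1 : Real.sqrt (m.factorial : ℝ) ≠ 0 := by positivity
    have hne2 : (Real.sqrt 2)^(m-1) ≠ 0 := by positivity
    have hQeq : Q = 2^(m-1) * (Real.sqrt 2)^(m-1) * Real.sqrt (m.factorial) := by
      rw [hQdef, mul_pow]
    have hN : ((m:ℝ)+1)*((m:ℝ)+2)*2^m ≤ 100 * 2^(m-1) * Real.sqrt (m.factorial) := by
      have h2p : (0:ℝ) ≤ 2^(m-1) := by positivity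
      calc ((m:ℝ)+1)*((m:ℝ)+2)*2^m = (((m:ℝ)+1)*((m:ℝ)+2)*2) * 2^(m-1) := by
            rw [h2m]; ring
        _ ≤ (50 * Real.sqrt (m.factorial) * 2) * 2^(m-1) := by
            apply mul_le_mul_of_nonneg_right _ h2p
            linarith
        _ = 100 * 2^(m-1) * Real.sqrt (m.factorial) := by ring
    have hrhseq : (100 * 2^(m-1) * Real.sqrt (m.factorial)) * Q⁻¹
        = 100 * ((Real.sqrt 2)^(m-1))⁻¹ := by
      rw [hQeq]
      field_simp
    calc ((m:ℝ)+1)*((m:ℝ)+2)*2^m * Q⁻¹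
        ≤ (100 * 2^(m-1) * Real.sqrt (m.factorial)) * Q⁻¹ := by
          apply mul_le_mul_of_nonneg_right hN (by positivity)
      _ = 100 * ((Real.sqrt 2)^(m-1))⁻¹ := hrhseq
  -- assemble
  calc ((k₁ + k₂ + 2).factorial : ℝ) / ((k₁.factorial : ℝ) * (k₂.factorial : ℝ)) *
          f ^ (((k₁ : ℝ) + (k₂ : ℝ) + 1) / 2) *
          ∏ t ∈ Finset.Icc 1 (k₁ + k₂), (f + 2 * (t : ℝ))⁻¹
      = (((m + 2).factorial : ℝ) / ((k₁.factorial : ℝ) * (k₂.factorial : ℝ))) *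
        (f ^ (((k₁ : ℝ) + (k₂ : ℝ) + 1) / 2) *
          (∏ t ∈ Finset.Icc 1 m, (f + 2 * (t:ℝ)))⁻¹) := by
        rw [Finset.prod_inv_distrib]; ring
    _ ≤ (((m:ℝ)+1)*((m:ℝ)+2)*2^m) * Q⁻¹ := by
        apply mul_le_mul hA hB (by positivity)
        positivity
    _ ≤ 100 * ((Real.sqrt 2)^(m-1))⁻¹ := hfinal
    _ = 100 * (2:ℝ) ^ (-((k₁ : ℝ) + (k₂ : ℝ) - 1) / 2) := by rw [hRHS]

end
end
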